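/- arXiv:1101.1898 — 5 statements merged into one kernel-verified Lean document; each statement's English description precedes it below -/
import Mathlib

section
/- For every positive integer n, the number of tuples (I^1,…,I^{n−1}), where each I^l is a subset of {1,…,n} of cardinality l and I^{l−1} \ {l} ⊆ I^l for all l = 2,…,n−1, is equal to the number of Dellac configurations of size n, i.e. to the normalized median Genocchi number h_n. -/
/-- A Dellac configuration of size `n`: a set `D` of boxes `(l, j)` with
`1 ≤ l ≤ n`, `1 ≤ j ≤ 2n`, such that each column `l` contains exactly two boxes
of `D`, each row `j` contains exactly one box of `D`, and every box `(l, j) ∈ D`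
satisfies `l ≤ j ≤ n + l`. -/
def IsDellac (n : ℕ) (D : Finset (ℕ × ℕ)) : Prop :=
  (∀ l, 1 ≤ l → l ≤ n → (D.filter fun p => p.1 = l).card = 2) ∧
  (∀ j, 1 ≤ j → j ≤ 2 * n → (D.filter fun p => p.2 = j).card = 1) ∧
  (∀ p ∈ D, 1 ≤ p.1 ∧ p.1 ≤ n ∧ p.1 ≤ p.2 ∧ p.2 ≤ n + p.1)

/-- An admissible tuple `(I^1, …, I^{n-1})`: each `I^l` is a subset of `{1, …, n}`
of cardinality `l`, and `I^{l-1} \ {l} ⊆ I^l` for `l = 2, …, n-1`.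
Here the index `l : Fin (n-1)` encodes the superscript `l + 1`. -/
def IsAdmissible (n : ℕ) (I : Fin (n - 1) → Finset ℕ) : Prop :=
  (∀ l, I l ⊆ Finset.Icc 1 n) ∧
  (∀ l, (I l).card = (l : ℕ) + 1) ∧
  (∀ l : Fin (n - 1), ∀ h : (l : ℕ) + 1 < n - 1,
    I l \ {(l : ℕ) + 2} ⊆ I ⟨(l : ℕ) + 1, h⟩)

namespace DellacAux

open Finset

variable (n : ℕ) (I : Fin (n - 1) → Finset ℕ)

def J (l : ℕ) : Finset ℕ :=
  if h : 1 ≤ l ∧ l < n then I ⟨l - 1, by omega⟩ else Finset.Icc 1 n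

noncomputable def c (i : ℕ) : ℕ :=
  min i (sInf {l | (1 ≤ l ∧ l ≤ n) ∧ i ∈ J n I l})

noncomputable def d (i : ℕ) : ℕ :=
  sInf {l | (i ≤ l ∧ l ≤ n) ∧ i ∈ J n I l}

noncomputable def DD : Finset (ℕ × ℕ) :=
  ((Finset.Icc 1 n).image fun i => (c n I i, i)) ∪
    ((Finset.Icc 1 n).image fun i => (d n I i, n + i))

variable {n I}

lemma J_of_lt {l : ℕ} (h1 : 1 ≤ l) (h2 : l < n) : J n I l = I ⟨l - 1, by omega⟩ := by
  simp [J, h1, h2]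

lemma J_n (hn : 1 ≤ n) : J n I n = Finset.Icc 1 n := by
  simp [J]

section adm
variable (hI : IsAdmissible n I)
include hI

lemma J_subset (l : ℕ) : J n I l ⊆ Finset.Icc 1 n := by
  unfold J; split
  · exact hI.1 _
  · exact subset_rfl

lemma J_card {l : ℕ} (h1 : 1 ≤ l) (h2 : l ≤ n) : (J n I l).card = l := by
  rcases lt_or_eq_of_le h2 with h | h
  · rw [J_of_lt h1 h, hI.2.1]; simp; omega
  · subst h; rw [J_n h1]; simp

lemma J_step {i l : ℕ} (h1 : 1 ≤ l) (h2 : l < n) (hm : i ∈ J n I l) (hne : i ≠ l + 1) :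
    i ∈ J n I (l + 1) := by
  rcases lt_or_eq_of_le (Nat.succ_le_of_lt h2) with h | h
  · rw [J_of_lt h1 h2] at hm
    rw [J_of_lt (by omega) h]
    have hlt : ((⟨l - 1, by omega⟩ : Fin (n - 1)) : ℕ) + 1 < n - 1 := by simp; omega
    have := hI.2.2 ⟨l - 1, by omega⟩ hlt
    have hmem : i ∈ I ⟨l - 1, by omega⟩ \ {((⟨l - 1, by omega⟩ : Fin (n-1)) : ℕ) + 2} := by
      simp only [Finset.mem_sdiff, Finset.mem_singleton]
      exact ⟨hm, by simpa using by omega⟩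
    have := this hmem
    convert this using 2
    simp; omega
  · have : l + 1 = n := h
    rw [this, J_n (by omega)]
    exact J_subset hI l hm

lemma J_climb {i a l : ℕ} (h1 : 1 ≤ a) (h2 : a ≤ l) (h3 : l ≤ n) (hm : i ∈ J n I a)
    (hne : ∀ m, a ≤ m → m < l → i ≠ m + 1) : i ∈ J n I l := by
  induction l with
  | zero => omega
  | succ k ih =>
    rcases lt_or_eq_of_le h2 with h | h
    · have hk : i ∈ J n I k := ih (by omega) (by omega) (fun m hm1 hm2 => hne m hm1 (by omega))
      exact J_step hI (by omega) (by omega) hk (hne k (by omega) (by omega))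
    · rwa [← h]


end adm

section cd
variable {i : ℕ} (hi1 : 1 ≤ i) (hin : i ≤ n)
include hi1 hin

lemma mem_J_n : i ∈ J n I n := by
  rw [J_n (by omega)]; simp [Finset.mem_Icc]; omega

lemma cSet_nonempty : {l | (1 ≤ l ∧ l ≤ n) ∧ i ∈ J n I l}.Nonempty :=
  ⟨n, ⟨⟨by omega, le_rfl⟩, mem_J_n hi1 hin⟩⟩

lemma dSet_nonempty : {l | (i ≤ l ∧ l ≤ n) ∧ i ∈ J n I l}.Nonempty :=
  ⟨n, ⟨⟨hin, le_rfl⟩, mem_J_n hi1 hin⟩⟩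

omit hi1 hin in
lemma c_le : c n I i ≤ i := min_le_left _ _

lemma c_pos : 1 ≤ c n I i := by
  have h := Nat.sInf_mem (cSet_nonempty (I := I) hi1 hin)
  exact le_min hi1 h.1.1

lemma d_ge : i ≤ d n I i := (Nat.sInf_mem (dSet_nonempty (I := I) hi1 hin)).1.1

lemma d_le : d n I i ≤ n := (Nat.sInf_mem (dSet_nonempty (I := I) hi1 hin)).1.2

lemma mem_J_d : i ∈ J n I (d n I i) := (Nat.sInf_mem (dSet_nonempty (I := I) hi1 hin)).2

lemma mem_iff (hI : IsAdmissible n I) {l : ℕ} (hl1 : 1 ≤ l) (hl2 : l ≤ n) :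
    i ∈ J n I l ↔ (c n I i ≤ l ∧ l < i) ∨ d n I i ≤ l := by
  constructor
  · intro hm
    rcases lt_or_ge l i with h | h
    · left
      refine ⟨le_trans (min_le_right _ _) (Nat.sInf_le ⟨⟨hl1, hl2⟩, hm⟩), h⟩
    · right
      exact Nat.sInf_le ⟨⟨h, hl2⟩, hm⟩
  · rintro (⟨h1, h2⟩ | h)
    · have hci : c n I i < i := lt_of_le_of_lt h1 h2
      have hcs : c n I i = sInf {l | (1 ≤ l ∧ l ≤ n) ∧ i ∈ J n I l} := by
        rcases min_cases i (sInf {l | (1 ≤ l ∧ l ≤ n) ∧ i ∈ J n I l}) with ⟨he, hle⟩ | ⟨he, hle⟩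
        · unfold c at hci; omega
        · exact he
      have hmem := Nat.sInf_mem (cSet_nonempty (I := I) hi1 hin)
      rw [← hcs] at hmem
      exact J_climb hI hmem.1.1 h1 hl2 hmem.2 (fun m _ hm2 => by omega)
    · exact J_climb hI (by have := d_ge (I := I) hi1 hin; omega) h hl2
        (mem_J_d hi1 hin) (fun m hm1 _ => by have := d_ge (I := I) hi1 hin; omega)

end cd

lemma card_le_split (w : ℕ → ℕ) {l : ℕ} (hl : 1 ≤ l) :
    ((Finset.Icc 1 n).filter fun i => w i ≤ l).card
      = ((Finset.Icc 1 n).filter fun i => w i ≤ l - 1).card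
        + ((Finset.Icc 1 n).filter fun i => w i = l).card := by
  rw [← Finset.card_union_of_disjoint, ← Finset.filter_or]
  · congr 1
    apply Finset.filter_congr; intro i _; omega
  · rw [Finset.disjoint_left]; intro a ha hb
    simp only [Finset.mem_filter] at ha hb; omega

lemma cum (hn : 1 ≤ n) (hI : IsAdmissible n I) {l : ℕ} (hl1 : 1 ≤ l) (hl2 : l ≤ n) :
    ((Finset.Icc 1 n).filter fun i => c n I i ≤ l).card
      + ((Finset.Icc 1 n).filter fun i => d n I i ≤ l).card = 2 * l := by
  have hJ : J n I l = (Finset.Icc 1 n).filter fun i => (c n I i ≤ l ∧ l < i) ∨ d n I i ≤ l := by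
    ext i
    simp only [Finset.mem_filter]
    constructor
    · intro h
      have hic := Finset.mem_Icc.mp (J_subset hI l h)
      exact ⟨J_subset hI l h, (mem_iff hic.1 hic.2 hI hl1 hl2).mp h⟩
    · rintro ⟨hic, h⟩
      have hic' := Finset.mem_Icc.mp hic
      exact (mem_iff hic'.1 hic'.2 hI hl1 hl2).mpr h
  have h1 : ((Finset.Icc 1 n).filter fun i => (c n I i ≤ l ∧ l < i) ∨ d n I i ≤ l).card
      = ((Finset.Icc 1 n).filter fun i => c n I i ≤ l ∧ l < i).card
        + ((Finset.Icc 1 n).filter fun i => d n I i ≤ l).card := by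
    rw [Finset.filter_or, Finset.card_union_of_disjoint]
    rw [Finset.disjoint_left]; intro a ha hb
    simp only [Finset.mem_filter, Finset.mem_Icc] at ha hb
    have := d_ge (I := I) ha.1.1 ha.1.2
    omega
  have h2 : ((Finset.Icc 1 n).filter fun i => c n I i ≤ l).card
      = l + ((Finset.Icc 1 n).filter fun i => c n I i ≤ l ∧ l < i).card := by
    have hsplit : (Finset.Icc 1 n).filter (fun i => c n I i ≤ l)
        = ((Finset.Icc 1 n).filter fun i => i ≤ l)
          ∪ ((Finset.Icc 1 n).filter fun i => c n I i ≤ l ∧ l < i) := by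
      rw [← Finset.filter_or]
      apply Finset.filter_congr; intro i hi
      have hi' := Finset.mem_Icc.mp hi
      have hc : c n I i ≤ i := c_le
      omega
    rw [hsplit, Finset.card_union_of_disjoint]
    · have : (Finset.Icc 1 n).filter (fun i => i ≤ l) = Finset.Icc 1 l := by
        ext i; simp only [Finset.mem_filter, Finset.mem_Icc]; omega
      rw [this]; simp [Nat.card_Icc]
    · rw [Finset.disjoint_left]; intro a ha hb
      simp only [Finset.mem_filter] at ha hb; omega
  have hcard := J_card hI hl1 hl2
  rw [hJ, h1] at hcard
  omega

lemma filter_le_zero_c (hI : IsAdmissible n I) :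
    ((Finset.Icc 1 n).filter fun i => c n I i ≤ 0) = ∅ := by
  apply Finset.filter_false_of_mem
  intro i hi
  have hi' := Finset.mem_Icc.mp hi
  have := c_pos (I := I) hi'.1 hi'.2
  omega

lemma filter_le_zero_d (hI : IsAdmissible n I) :
    ((Finset.Icc 1 n).filter fun i => d n I i ≤ 0) = ∅ := by
  apply Finset.filter_false_of_mem
  intro i hi
  have hi' := Finset.mem_Icc.mp hi
  have := d_ge (I := I) hi'.1 hi'.2
  omega

lemma fiber (hn : 1 ≤ n) (hI : IsAdmissible n I) {l : ℕ} (hl1 : 1 ≤ l) (hl2 : l ≤ n) :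
    ((Finset.Icc 1 n).filter fun i => c n I i = l).card
      + ((Finset.Icc 1 n).filter fun i => d n I i = l).card = 2 := by
  have hc := card_le_split (n := n) (c n I) hl1
  have hd := card_le_split (n := n) (d n I) hl1
  have h1 := cum hn hI hl1 hl2
  rcases Nat.eq_or_lt_of_le hl1 with h | h
  · subst h
    simp only [Nat.sub_self, filter_le_zero_c hI, filter_le_zero_d hI, Finset.card_empty] at hc hd
    omega
  · have h0 := cum hn hI (l := l - 1) (by omega) (by omega)
    omega

section union

/-- union of two "graphs", generic form of a Dellac configuration -/
def U (n : ℕ) (u v : ℕ → ℕ) : Finset (ℕ × ℕ) :=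
  ((Finset.Icc 1 n).image fun i => (u i, i)) ∪ ((Finset.Icc 1 n).image fun i => (v i, n + i))

variable {u v : ℕ → ℕ}

lemma col_card (l : ℕ) :
    ((U n u v).filter fun p => p.1 = l).card
      = ((Finset.Icc 1 n).filter fun i => u i = l).card
        + ((Finset.Icc 1 n).filter fun i => v i = l).card := by
  unfold U
  rw [Finset.filter_union, Finset.card_union_of_disjoint, Finset.filter_image,
    Finset.filter_image, Finset.card_image_of_injOn, Finset.card_image_of_injOn]
  · intro a _ b _ hab
    exact by simpa using congrArg Prod.snd hab
  · intro a _ b _ hab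
    exact by simpa using congrArg Prod.snd hab
  · rw [Finset.disjoint_left]
    rintro p hp hq
    simp only [Finset.filter_image, Finset.mem_image, Finset.mem_filter, Finset.mem_Icc] at hp hq
    obtain ⟨a, ha, rfl⟩ := hp
    obtain ⟨b, hb, hba⟩ := hq
    have := congrArg Prod.snd hba
    simp at this
    omega

lemma row_filter_low {j : ℕ} (h1 : 1 ≤ j) (h2 : j ≤ n) :
    (U n u v).filter (fun p => p.2 = j) = {(u j, j)} := by
  ext p
  simp only [U, Finset.filter_union, Finset.mem_union, Finset.mem_filter, Finset.mem_image,
    Finset.mem_Icc, Finset.mem_singleton]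
  constructor
  · rintro (⟨⟨i, hi, rfl⟩, hp⟩ | ⟨⟨i, hi, rfl⟩, hp⟩)
    · simp only at hp
      subst hp; rfl
    · simp only at hp
      omega
  · rintro rfl
    exact Or.inl ⟨⟨j, ⟨h1, h2⟩, rfl⟩, rfl⟩

lemma row_filter_high {j : ℕ} (h1 : n < j) (h2 : j ≤ 2 * n) :
    (U n u v).filter (fun p => p.2 = j) = {(v (j - n), j)} := by
  ext p
  simp only [U, Finset.filter_union, Finset.mem_union, Finset.mem_filter, Finset.mem_image,
    Finset.mem_Icc, Finset.mem_singleton]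
  constructor
  · rintro (⟨⟨i, hi, rfl⟩, hp⟩ | ⟨⟨i, hi, rfl⟩, hp⟩)
    · simp only at hp
      omega
    · simp only at hp
      have hij : i = j - n := by omega
      subst hij
      simp only [Prod.mk.injEq]
      exact ⟨trivial, by omega⟩
  · rintro rfl
    refine Or.inr ⟨⟨j - n, ⟨by omega, by omega⟩, ?_⟩, rfl⟩
    simp only [Prod.mk.injEq]
    exact ⟨trivial, by omega⟩

lemma U_mem_left {i : ℕ} (h1 : 1 ≤ i) (h2 : i ≤ n) : (u i, i) ∈ U n u v := by
  simp only [U, Finset.mem_union, Finset.mem_image, Finset.mem_Icc]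
  exact Or.inl ⟨i, ⟨h1, h2⟩, rfl⟩

lemma U_mem_right {i : ℕ} (h1 : 1 ≤ i) (h2 : i ≤ n) : (v i, n + i) ∈ U n u v := by
  simp only [U, Finset.mem_union, Finset.mem_image, Finset.mem_Icc]
  exact Or.inr ⟨i, ⟨h1, h2⟩, rfl⟩

lemma U_fst {x i : ℕ} (h1 : 1 ≤ i) (h2 : i ≤ n) (h : (x, i) ∈ U n u v) : x = u i := by
  simp only [U, Finset.mem_union, Finset.mem_image, Finset.mem_Icc, Prod.mk.injEq] at h
  rcases h with ⟨a, _, ha1, ha2⟩ | ⟨a, ha, ha1, ha2⟩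
  · subst ha2; exact ha1.symm
  · omega

lemma U_snd {x i : ℕ} (h1 : 1 ≤ i) (h2 : i ≤ n) (h : (x, n + i) ∈ U n u v) : x = v i := by
  simp only [U, Finset.mem_union, Finset.mem_image, Finset.mem_Icc, Prod.mk.injEq] at h
  rcases h with ⟨a, ha, ha1, ha2⟩ | ⟨a, ha, ha1, ha2⟩
  · omega
  · have : a = i := by omega
    subst this; exact ha1.symm

end union

lemma DD_eq_U : DD n I = U n (c n I) (d n I) := rfl

lemma isDellac_DD (hn : 1 ≤ n) (hI : IsAdmissible n I) : IsDellac n (DD n I) := by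
  refine ⟨?_, ?_, ?_⟩
  · intro l hl1 hl2
    rw [DD_eq_U, col_card]
    exact fiber hn hI hl1 hl2
  · intro j hj1 hj2
    rcases le_or_gt j n with h | h
    · rw [DD_eq_U, row_filter_low hj1 h]; simp
    · rw [DD_eq_U, row_filter_high h hj2]; simp
  · intro p hp
    simp only [DD, Finset.mem_union, Finset.mem_image, Finset.mem_Icc] at hp
    rcases hp with ⟨i, hi, rfl⟩ | ⟨i, hi, rfl⟩
    · have h1 := c_pos (I := I) hi.1 hi.2
      have h2 : c n I i ≤ i := c_le
      exact ⟨h1, by omega, h2, by omega⟩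
    · have h1 := d_ge (I := I) hi.1 hi.2
      have h2 := d_le (I := I) hi.1 hi.2
      exact ⟨by omega, h2, by omega, by omega⟩

lemma mem_I_iff (hI : IsAdmissible n I) (l : Fin (n - 1)) (i : ℕ) :
    i ∈ I l ↔ i ∈ Finset.Icc 1 n
      ∧ ((c n I i ≤ (l : ℕ) + 1 ∧ (l : ℕ) + 1 < i) ∨ d n I i ≤ (l : ℕ) + 1) := by
  have hl := l.isLt
  have hJ : J n I ((l : ℕ) + 1) = I l := by
    rw [J_of_lt (by omega) (by omega)]
    congr 1
  constructor
  · intro h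
    have h1 : i ∈ Finset.Icc 1 n := hI.1 l h
    have h2 := Finset.mem_Icc.mp h1
    exact ⟨h1, (mem_iff h2.1 h2.2 hI (by omega) (by omega)).mp (hJ ▸ h)⟩
  · rintro ⟨h1, h2⟩
    have h3 := Finset.mem_Icc.mp h1
    have := (mem_iff h3.1 h3.2 hI (by omega) (by omega)).mpr h2
    rwa [hJ] at this

/-! ### From Dellac configurations to admissible tuples -/

/-- the column of the unique box in row `j`. -/
noncomputable def r (D : Finset (ℕ × ℕ)) (j : ℕ) : ℕ := sInf {l | (l, j) ∈ D}

/-- the admissible tuple associated to a Dellac configuration. -/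
noncomputable def IofD (n : ℕ) (D : Finset (ℕ × ℕ)) : Fin (n - 1) → Finset ℕ :=
  fun l => (Finset.Icc 1 n).filter fun i =>
    (r D i ≤ (l : ℕ) + 1 ∧ (l : ℕ) + 1 < i) ∨ r D (n + i) ≤ (l : ℕ) + 1

section dellac

variable {D : Finset (ℕ × ℕ)} (hD : IsDellac n D)
include hD

lemma r_mem {j : ℕ} (hj1 : 1 ≤ j) (hj2 : j ≤ 2 * n) : (r D j, j) ∈ D := by
  have h := hD.2.1 j hj1 hj2
  have hne : {l | (l, j) ∈ D}.Nonempty := by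
    have h2 : (D.filter fun p => p.2 = j).Nonempty := Finset.card_pos.mp (by rw [h]; norm_num)
    obtain ⟨p, hp⟩ := h2
    simp only [Finset.mem_filter] at hp
    refine ⟨p.1, ?_⟩
    show (p.1, j) ∈ D
    rw [← hp.2]
    exact hp.1
  exact Nat.sInf_mem hne

lemma r_unique {l j : ℕ} (hj1 : 1 ≤ j) (hj2 : j ≤ 2 * n) (h : (l, j) ∈ D) : l = r D j := by
  have h1 := hD.2.1 j hj1 hj2
  obtain ⟨a, ha⟩ := Finset.card_eq_one.mp h1
  have hm : (l, j) ∈ D.filter (fun p => p.2 = j) := Finset.mem_filter.mpr ⟨h, rfl⟩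
  have hm' : (r D j, j) ∈ D.filter (fun p => p.2 = j) :=
    Finset.mem_filter.mpr ⟨r_mem hD hj1 hj2, rfl⟩
  rw [ha, Finset.mem_singleton] at hm hm'
  have := hm.trans hm'.symm
  exact congrArg Prod.fst this

lemma r_low_le {i : ℕ} (h1 : 1 ≤ i) (h2 : i ≤ n) : 1 ≤ r D i ∧ r D i ≤ i := by
  have h := hD.2.2 _ (r_mem hD h1 (by omega))
  exact ⟨h.1, h.2.2.1⟩

lemma r_high_le {i : ℕ} (h1 : 1 ≤ i) (h2 : i ≤ n) : i ≤ r D (n + i) ∧ r D (n + i) ≤ n := by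
  have h := hD.2.2 _ (r_mem hD (j := n + i) (by omega) (by omega))
  exact ⟨by have := h.2.2.2; simp at this; omega, h.2.1⟩

lemma D_eq_U : D = U n (fun i => r D i) (fun i => r D (n + i)) := by
  ext p
  constructor
  · intro hp
    have hb := hD.2.2 p hp
    simp only [U, Finset.mem_union, Finset.mem_image, Finset.mem_Icc]
    rcases le_or_gt p.2 n with h | h
    · left
      refine ⟨p.2, ⟨by omega, h⟩, ?_⟩
      have he : p.1 = r D p.2 := r_unique hD (by omega) (by omega) hp
      rw [← he]
    · right
      refine ⟨p.2 - n, ⟨by omega, by omega⟩, ?_⟩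
      have hnn : n + (p.2 - n) = p.2 := by omega
      have he : p.1 = r D (n + (p.2 - n)) := by
        rw [hnn]
        exact r_unique hD (by omega) (by omega) hp
      rw [← he, hnn]
  · intro hp
    simp only [U, Finset.mem_union, Finset.mem_image, Finset.mem_Icc] at hp
    rcases hp with ⟨i, hi, rfl⟩ | ⟨i, hi, rfl⟩
    · exact r_mem hD (by omega) (by omega)
    · exact r_mem hD (by omega) (by omega)

lemma fiberD {l : ℕ} (hl1 : 1 ≤ l) (hl2 : l ≤ n) :
    ((Finset.Icc 1 n).filter fun i => r D i = l).card
      + ((Finset.Icc 1 n).filter fun i => r D (n + i) = l).card = 2 := by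
  have h2 := hD.1 l hl1 hl2
  rw [D_eq_U hD] at h2
  rw [← col_card (l := l)]
  exact h2

lemma cumD : ∀ l, l ≤ n →
    ((Finset.Icc 1 n).filter fun i => r D i ≤ l).card
      + ((Finset.Icc 1 n).filter fun i => r D (n + i) ≤ l).card = 2 * l := by
  intro l
  induction l with
  | zero =>
    intro _
    have e1 : ((Finset.Icc 1 n).filter fun i => r D i ≤ 0) = ∅ := by
      apply Finset.filter_false_of_mem
      intro i hi
      have hi' := Finset.mem_Icc.mp hi
      have := (r_low_le hD hi'.1 hi'.2).1
      omega
    have e2 : ((Finset.Icc 1 n).filter fun i => r D (n + i) ≤ 0) = ∅ := by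
      apply Finset.filter_false_of_mem
      intro i hi
      have hi' := Finset.mem_Icc.mp hi
      have := (r_high_le hD hi'.1 hi'.2).1
      omega
    rw [e1, e2]
    simp
  | succ k ih =>
    intro hk
    have h1 := card_le_split (n := n) (fun i => r D i) (l := k + 1) (by omega)
    have h2 := card_le_split (n := n) (fun i => r D (n + i)) (l := k + 1) (by omega)
    have h3 := fiberD hD (l := k + 1) (by omega) hk
    have h4 := ih (by omega)
    simp only [Nat.add_sub_cancel] at h1 h2
    omega

lemma adm_IofD (hn : 1 ≤ n) : IsAdmissible n (IofD n D) := by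
  refine ⟨fun l => Finset.filter_subset _ _, ?_, ?_⟩
  · intro l
    have hl := l.isLt
    set L := (l : ℕ) + 1 with hL
    have hL1 : 1 ≤ L := by omega
    have hLn : L ≤ n := by omega
    have hsplit : (IofD n D l).card
        = ((Finset.Icc 1 n).filter fun i => r D i ≤ L ∧ L < i).card
          + ((Finset.Icc 1 n).filter fun i => r D (n + i) ≤ L).card := by
      unfold IofD
      rw [Finset.filter_or, Finset.card_union_of_disjoint]
      rw [Finset.disjoint_left]
      intro a ha hb
      simp only [Finset.mem_filter, Finset.mem_Icc] at ha hb
      have := (r_high_le hD ha.1.1 ha.1.2).1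
      omega
    have hlow : ((Finset.Icc 1 n).filter fun i => r D i ≤ L).card
        = L + ((Finset.Icc 1 n).filter fun i => r D i ≤ L ∧ L < i).card := by
      have hs : (Finset.Icc 1 n).filter (fun i => r D i ≤ L)
          = ((Finset.Icc 1 n).filter fun i => i ≤ L)
            ∪ ((Finset.Icc 1 n).filter fun i => r D i ≤ L ∧ L < i) := by
        rw [← Finset.filter_or]
        apply Finset.filter_congr
        intro i hi
        have hi' := Finset.mem_Icc.mp hi
        have := (r_low_le hD hi'.1 hi'.2).2
        omega
      rw [hs, Finset.card_union_of_disjoint]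
      · have : (Finset.Icc 1 n).filter (fun i => i ≤ L) = Finset.Icc 1 L := by
          ext i
          simp only [Finset.mem_filter, Finset.mem_Icc]
          omega
        rw [this]
        simp [Nat.card_Icc]
      · rw [Finset.disjoint_left]
        intro a ha hb
        simp only [Finset.mem_filter] at ha hb
        omega
    have hcum := cumD hD L hLn
    omega
  · intro l hl i hi
    simp only [IofD, Finset.mem_sdiff, Finset.mem_filter, Finset.mem_singleton] at hi
    simp only [IofD, Finset.mem_filter]
    obtain ⟨⟨hIcc, hor⟩, hne⟩ := hi
    refine ⟨hIcc, ?_⟩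
    rcases hor with ⟨ha, hb⟩ | h
    · left
      constructor
      · omega
      · omega
    · right
      omega

lemma J_IofD {l : ℕ} (hl1 : 1 ≤ l) (hl2 : l ≤ n) (i : ℕ) :
    i ∈ J n (IofD n D) l
      ↔ i ∈ Finset.Icc 1 n ∧ ((r D i ≤ l ∧ l < i) ∨ r D (n + i) ≤ l) := by
  rcases lt_or_eq_of_le hl2 with h | h
  · rw [J_of_lt hl1 h]
    simp only [IofD, Finset.mem_filter]
    have : ((⟨l - 1, by omega⟩ : Fin (n - 1)) : ℕ) + 1 = l := by simp; omega
    rw [this]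
  · subst h
    rw [J_n hl1]
    constructor
    · intro hi
      have hi' := Finset.mem_Icc.mp hi
      exact ⟨hi, Or.inr (r_high_le hD hi'.1 hi'.2).2⟩
    · exact fun h => h.1

lemma c_IofD {i : ℕ} (h1 : 1 ≤ i) (h2 : i ≤ n) : c n (IofD n D) i = r D i := by
  set S := {l | (1 ≤ l ∧ l ≤ n) ∧ i ∈ J n (IofD n D) l} with hS
  have hiff : ∀ l, l ∈ S ↔ (1 ≤ l ∧ l ≤ n) ∧ ((r D i ≤ l ∧ l < i) ∨ r D (n + i) ≤ l) := by
    intro l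
    constructor
    · rintro ⟨hb, hm⟩
      exact ⟨hb, ((J_IofD hD hb.1 hb.2 i).mp hm).2⟩
    · rintro ⟨hb, hm⟩
      exact ⟨hb, (J_IofD hD hb.1 hb.2 i).mpr ⟨Finset.mem_Icc.mpr ⟨h1, h2⟩, hm⟩⟩
  have hr1 := r_low_le hD h1 h2
  have hr2 := r_high_le hD h1 h2
  rcases lt_or_eq_of_le hr1.2 with h | h
  · have hmem : r D i ∈ S := (hiff _).mpr ⟨⟨by omega, by omega⟩, Or.inl ⟨le_rfl, h⟩⟩
    have hlb : ∀ l ∈ S, r D i ≤ l := by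
      intro l hl
      rcases ((hiff _).mp hl).2 with ⟨ha, _⟩ | hb
      · exact ha
      · omega
    have heq : sInf S = r D i :=
      le_antisymm (Nat.sInf_le hmem) (hlb _ (Nat.sInf_mem ⟨_, hmem⟩))
    rw [c, ← hS, heq]
    omega
  · have hmem : n ∈ S := (hiff _).mpr ⟨⟨by omega, le_rfl⟩, Or.inr hr2.2⟩
    have hge : i ≤ sInf S := by
      have hm := Nat.sInf_mem (⟨_, hmem⟩ : S.Nonempty)
      rcases ((hiff _).mp hm).2 with ⟨ha, hb⟩ | hb
      · omega
      · omega
    rw [c, ← hS]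
    omega

lemma d_IofD {i : ℕ} (h1 : 1 ≤ i) (h2 : i ≤ n) : d n (IofD n D) i = r D (n + i) := by
  set T := {l | (i ≤ l ∧ l ≤ n) ∧ i ∈ J n (IofD n D) l} with hT
  have hr2 := r_high_le hD h1 h2
  have hiff : ∀ l, l ∈ T ↔ (i ≤ l ∧ l ≤ n) ∧ ((r D i ≤ l ∧ l < i) ∨ r D (n + i) ≤ l) := by
    intro l
    constructor
    · rintro ⟨hb, hm⟩
      exact ⟨hb, ((J_IofD hD (by omega) hb.2 i).mp hm).2⟩
    · rintro ⟨hb, hm⟩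
      exact ⟨hb, (J_IofD hD (by omega) hb.2 i).mpr ⟨Finset.mem_Icc.mpr ⟨h1, h2⟩, hm⟩⟩
  have hmem : r D (n + i) ∈ T := (hiff _).mpr ⟨⟨hr2.1, hr2.2⟩, Or.inr le_rfl⟩
  have hlb : ∀ l ∈ T, r D (n + i) ≤ l := by
    intro l hl
    obtain ⟨hb, hm⟩ := (hiff _).mp hl
    rcases hm with ⟨_, hc⟩ | hc
    · omega
    · exact hc
  rw [d, ← hT]
  exact le_antisymm (Nat.sInf_le hmem) (hlb _ (Nat.sInf_mem ⟨_, hmem⟩))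

lemma DD_IofD (hn : 1 ≤ n) : DD n (IofD n D) = D := by
  have key : DD n (IofD n D) = U n (fun i => r D i) (fun i => r D (n + i)) := by
    rw [DD_eq_U]
    unfold U
    congr 1
    · apply Finset.image_congr
      intro i hi
      have hi' := Finset.mem_Icc.mp hi
      simp only
      rw [c_IofD hD hi'.1 hi'.2]
    · apply Finset.image_congr
      intro i hi
      have hi' := Finset.mem_Icc.mp hi
      simp only
      rw [d_IofD hD hi'.1 hi'.2]
  rw [key]
  exact (D_eq_U hD).symm

end dellac

end DellacAux

/-- The number of tuples `(I^1, …, I^{n-1})` with `I^l ⊆ {1, …, n}`, `#I^l = l`,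
and `I^{l-1} \ {l} ⊆ I^l` for `l = 2, …, n-1`, equals the number of Dellac
configurations of size `n`, i.e. the normalized median Genocchi number `h_n`. -/
theorem card_admissible_eq_card_dellac (n : ℕ) (hn : 1 ≤ n) :
    Nat.card {I : Fin (n - 1) → Finset ℕ // IsAdmissible n I} =
      Nat.card {D : Finset (ℕ × ℕ) // IsDellac n D} := by
  apply Nat.card_eq_of_bijective
    (fun x => (⟨DellacAux.DD n x.1, DellacAux.isDellac_DD hn x.2⟩ : {D // IsDellac n D}))
  constructor
  · intro a b hab
    have hDD : DellacAux.DD n a.1 = DellacAux.DD n b.1 := congrArg Subtype.val hab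
    apply Subtype.ext
    funext l
    ext i
    rw [DellacAux.mem_I_iff a.2 l i, DellacAux.mem_I_iff b.2 l i]
    have hc : ∀ k, 1 ≤ k → k ≤ n → DellacAux.c n a.1 k = DellacAux.c n b.1 k := by
      intro k h1 h2
      have hm : (DellacAux.c n a.1 k, k)
          ∈ DellacAux.U n (DellacAux.c n b.1) (DellacAux.d n b.1) := by
        rw [← DellacAux.DD_eq_U, ← hDD, DellacAux.DD_eq_U]
        exact DellacAux.U_mem_left h1 h2
      exact DellacAux.U_fst h1 h2 hm
    have hd : ∀ k, 1 ≤ k → k ≤ n → DellacAux.d n a.1 k = DellacAux.d n b.1 k := by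
      intro k h1 h2
      have hm : (DellacAux.d n a.1 k, n + k)
          ∈ DellacAux.U n (DellacAux.c n b.1) (DellacAux.d n b.1) := by
        rw [← DellacAux.DD_eq_U, ← hDD, DellacAux.DD_eq_U]
        exact DellacAux.U_mem_right h1 h2
      exact DellacAux.U_snd h1 h2 hm
    constructor
    · rintro ⟨h1, h2⟩
      have h3 := Finset.mem_Icc.mp h1
      refine ⟨h1, ?_⟩
      rw [← hc i h3.1 h3.2, ← hd i h3.1 h3.2]
      exact h2
    · rintro ⟨h1, h2⟩
      have h3 := Finset.mem_Icc.mp h1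
      refine ⟨h1, ?_⟩
      rw [hc i h3.1 h3.2, hd i h3.1 h3.2]
      exact h2
  · rintro ⟨D, hD⟩
    exact ⟨⟨DellacAux.IofD n D, DellacAux.adm_IofD hD hn⟩,
      Subtype.ext (DellacAux.DD_IofD hD hn)⟩
end

section
/- For every positive integer n, the number of normalized Dumont permutations of the second kind on {1,…,2n+2} equals the number of Dellac configurations of size n. -/
/-- A normalized Dumont permutation of the second kind on `{1, …, 2n+2}`:
`σ(k) < k` for even `k`, `σ(k) > k` for odd `k`, and `σ⁻¹(2k) < σ⁻¹(2k+1)`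
for `k = 1, …, n`.  Here `Fin (2*n+2)` encodes `{1, …, 2n+2}` via `v ↦ v + 1`. -/
def IsPD2N (n : ℕ) (σ : Equiv.Perm (Fin (2 * n + 2))) : Prop :=
  (∀ k : Fin (2 * n + 2), Even ((k : ℕ) + 1) → ((σ k : ℕ) < (k : ℕ))) ∧
  (∀ k : Fin (2 * n + 2), Odd ((k : ℕ) + 1) → ((k : ℕ) < (σ k : ℕ))) ∧
  (∀ k : ℕ, ∀ _h1 : 1 ≤ k, ∀ h2 : k ≤ n,
    ((σ.symm ⟨2 * k - 1, by omega⟩ : Fin (2 * n + 2)) : ℕ) <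
      ((σ.symm ⟨2 * k, by omega⟩ : Fin (2 * n + 2)) : ℕ))

/-!
Recording only the pair `⌊σ(k)/2⌋` hit by each position `k` loses nothing: the condition
`σ⁻¹(2k) < σ⁻¹(2k+1)` says which of the two positions sent to pair `k` receives the smaller value.
So normalized Dumont permutations are the same as maps from positions to the pair indices
`0, 1, …, n, n + 1` with fibres of sizes `1, 2, …, 2, 1`, subject to one constraint per position.
Listing the positions `2, 4, …, 2n+2, 1, 3, …, 2n+1` as rows `0, …, 2n+1` turns that constraint
into the strip condition `l ≤ j ≤ n + l` of Dellac configurations; the two singleton fibres are the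
forced boxes `(0, 0)` and `(n + 1, 2n + 1)`, and deleting them leaves a Dellac configuration.
-/

open Finset

def StrictMonoOnFibers {α β γ : Type*} [Preorder α] [Preorder γ] (π : γ → β) (h : γ → α) :
    Prop :=
  ∀ ⦃v w⦄, π v = π w → v < w → h v < h w

def SameFiberCards {α β γ : Type*} [Fintype α] [Fintype γ] [DecidableEq β] (f : α → β)
    (π : γ → β) : Prop :=
  ∀ b, #{a | f a = b} = #{c | π c = b}

theorem eq_iff_eq_of_card_filter_eq_one {α β : Type*} [Fintype α] [DecidableEq β] {f : α → β}
    {a₀ : α} {b : β} (hcard : #{a | f a = b} = 1) (ha₀ : f a₀ = b) (a : α) :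
    f a = b ↔ a = a₀ :=
  ⟨fun ha => card_le_one.mp hcard.le a (by simp [ha]) a₀ (by simp [ha₀]), fun h => h ▸ ha₀⟩

section FiberwiseMonotone

variable {α β γ : Type*} [LinearOrder α] [LinearOrder γ]

theorem eq_of_comp_eq_of_strictMonoOnFibers [Finite γ] {π : γ → β} {e e' : α ≃ γ}
    (he : StrictMonoOnFibers π e.symm) (he' : StrictMonoOnFibers π e'.symm)
    (h : π ∘ e = π ∘ e') : e = e' := by
  refine Equiv.symm_bijective.injective (Equiv.ext fun v => ?_)
  have mono : ∀ e : α ≃ γ, StrictMonoOnFibers π e.symm →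
      StrictMono fun w : {w // π w = π v} => e.symm w :=
    fun e he w w' hlt => he (w.2.trans w'.2.symm) hlt
  have range : ∀ e : α ≃ γ,
      Set.range (fun w : {w // π w = π v} => e.symm w) = {a | (π ∘ e) a = π v} := by
    intro e
    ext a
    exact ⟨by rintro ⟨w, rfl⟩; simpa using w.2, fun ha => ⟨⟨e a, ha⟩, by simp⟩⟩
  have := ((mono e he).range_inj (mono e' he')).1 (by rw [range, range, h])
  exact congrFun this ⟨v, rfl⟩

variable [Fintype α] [Fintype γ] [DecidableEq β]

theorem exists_strictMonoOnFibers_comp_eq {π : γ → β} {f : α → β}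
    (hf : SameFiberCards f π) : ∃ e : α ≃ γ, StrictMonoOnFibers π e.symm ∧ π ∘ e = f := by
  have hcard : ∀ b, Fintype.card {c // π c = b} = Fintype.card {a // f a = b} := by
    simpa only [Fintype.card_subtype] using fun b => (hf b).symm
  let ψ : ∀ b, {a // f a = b} ≃o {c // π c = b} := fun b =>
    (Fintype.orderIsoFinOfCardEq _ rfl).symm.trans (Fintype.orderIsoFinOfCardEq _ (hcard b))
  refine ⟨Equiv.ofFiberEquiv fun b => (ψ b).toEquiv, fun v w hvw hlt => ?_,
    funext (Equiv.ofFiberEquiv_map _)⟩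
  have symm_apply : ∀ {u b} (hu : π u = b),
      (Equiv.ofFiberEquiv fun b => (ψ b).toEquiv).symm u = ((ψ b).symm ⟨u, hu⟩ : α) := by
    rintro u b rfl
    rfl
  rw [symm_apply hvw, symm_apply rfl]
  exact (ψ (π w)).symm.strictMono hlt

theorem card_strictMonoOnFibers_eq (π : γ → β) (Q : (α → β) → Prop) :
    Nat.card {e : α ≃ γ // StrictMonoOnFibers π e.symm ∧ Q (π ∘ e)} =
      Nat.card {f : α → β // SameFiberCards f π ∧ Q f} := by
  refine Nat.card_eq_of_bijective
    (fun e => ⟨π ∘ e.1, fun b => card_equiv e.1 (by simp), e.2.2⟩) ⟨?_, ?_⟩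
  · intro e e' h
    exact Subtype.ext (eq_of_comp_eq_of_strictMonoOnFibers e.2.1 e'.2.1 (congrArg Subtype.val h))
  · rintro ⟨f, hf, hQ⟩
    obtain ⟨e, he, rfl⟩ := exists_strictMonoOnFibers_comp_eq hf
    exact ⟨⟨e, he, hQ⟩, rfl⟩

end FiberwiseMonotone

/-- With the `Fin` encoding `v ↦ v + 1` of `IsPD2N`, the fibres are `{0}`, the Dumont pairs
`{2k - 1, 2k}` (the values `2k, 2k + 1`) for `1 ≤ k ≤ n`, and `{2n + 1}`. -/
def pairIndex (n : ℕ) (v : Fin (2 * n + 2)) : ℕ := ((v : ℕ) + 1) / 2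

def InStrip (n l j : ℕ) : Prop := l ≤ j ∧ j ≤ n + l

def dumontRow (n p : ℕ) : ℕ := if Odd p then p / 2 else n + 1 + p / 2

theorem dumont_ineq_iff_inStrip {n p v : ℕ} (hp : p < 2 * n + 2) (hv : v < 2 * n + 2) :
    ((Even (p + 1) → v < p) ∧ (Odd (p + 1) → p < v)) ↔
      InStrip n ((v + 1) / 2) (dumontRow n p) := by
  unfold InStrip dumontRow
  simp only [Nat.odd_iff, Nat.even_iff]
  split_ifs <;> omega

theorem isPD2N_iff {n : ℕ} (σ : Equiv.Perm (Fin (2 * n + 2))) :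
    IsPD2N n σ ↔ StrictMonoOnFibers (pairIndex n) σ.symm ∧
      ∀ p, InStrip n (pairIndex n (σ p)) (dumontRow n p) := by
  have pairs : (∀ k : ℕ, ∀ _h1 : 1 ≤ k, ∀ h2 : k ≤ n,
      ((σ.symm ⟨2 * k - 1, by omega⟩ : Fin (2 * n + 2)) : ℕ) <
        ((σ.symm ⟨2 * k, by omega⟩ : Fin (2 * n + 2)) : ℕ)) ↔
      StrictMonoOnFibers (pairIndex n) σ.symm := by
    refine ⟨fun h v w hvw hlt => ?_, fun h k hk₁ hk₂ =>
      h (by simp only [pairIndex]; omega) (by simp only [Fin.lt_def]; omega)⟩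
    simp only [pairIndex] at hvw
    rw [Fin.lt_def] at hlt
    obtain ⟨k, hk⟩ : ∃ k, (w : ℕ) = 2 * k := ⟨((w : ℕ) + 1) / 2, by omega⟩
    have hk2 : 2 * k < 2 * n + 2 := hk ▸ w.2
    obtain rfl : v = ⟨2 * k - 1, (Nat.sub_le _ _).trans_lt hk2⟩ := Fin.ext (by simp only; omega)
    obtain rfl : w = ⟨2 * k, hk2⟩ := Fin.ext hk
    exact h k (by omega) (by omega)
  rw [IsPD2N, ← pairs, ← and_assoc, ← forall_and]
  exact (and_congr_left' (forall_congr' fun p => dumont_ineq_iff_inStrip p.2 (σ p).2)).trans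
    and_comm

theorem dumontRow_lt {n p : ℕ} (hp : p < 2 * n + 2) : dumontRow n p < 2 * n + 2 := by
  unfold dumontRow
  split_ifs <;> omega

theorem dumontRow_injective (n : ℕ) :
    Function.Injective fun p : Fin (2 * n + 2) => dumontRow n p := by
  intro p q h
  simp only [dumontRow, Nat.odd_iff] at h
  ext
  split_ifs at h <;> omega

noncomputable def dumontRowEquiv (n : ℕ) : Equiv.Perm (Fin (2 * n + 2)) :=
  Equiv.ofBijective (fun p => ⟨dumontRow n p, dumontRow_lt p.2⟩)
    (Finite.injective_iff_bijective.mp fun _ _ h => dumontRow_injective n (congrArg Fin.val h))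

theorem card_dumontRow_strip_eq_card_strip (n : ℕ) :
    Nat.card {f : Fin (2 * n + 2) → ℕ //
        SameFiberCards f (pairIndex n) ∧ ∀ p, InStrip n (f p) (dumontRow n p)} =
      Nat.card {g : Fin (2 * n + 2) → ℕ //
        SameFiberCards g (pairIndex n) ∧ ∀ j, InStrip n (g j) j} := by
  set e := dumontRowEquiv n
  refine Nat.card_congr (Equiv.subtypeEquiv (e.arrowCongr (Equiv.refl ℕ)) fun f => ?_)
  have fibers : SameFiberCards f (pairIndex n) ↔ SameFiberCards (f ∘ e.symm) (pairIndex n) := by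
    refine forall_congr' fun b => ?_
    rw [card_equiv (s := {a | f a = b}) (t := {j | (f ∘ e.symm) j = b}) e (by simp)]
  have strip : (∀ p, InStrip n (f p) (dumontRow n p)) ↔ ∀ j, InStrip n (f (e.symm j)) j :=
    e.symm.forall_congr_right.symm.trans
      (forall_congr' fun j => by rw [← congrArg Fin.val (e.apply_symm_apply j)]; rfl)
  rw [fibers, strip]
  rfl

theorem card_filter_pairIndex (n b : ℕ) :
    #{c : Fin (2 * n + 2) | pairIndex n c = b} =
      if b = 0 ∨ b = n + 1 then 1 else if b ≤ n then 2 else 0 := by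
  split_ifs with hcorner hmid
  · rw [card_eq_one]
    refine ⟨⟨if b = 0 then 0 else 2 * n + 1, by split_ifs <;> omega⟩, ?_⟩
    ext c
    simp only [mem_filter, mem_univ, true_and, mem_singleton, Fin.ext_iff]
    unfold pairIndex
    split_ifs <;> omega
  · rw [card_eq_two]
    refine ⟨⟨2 * b - 1, by omega⟩, ⟨2 * b, by omega⟩, by simp [Fin.ext_iff]; omega, ?_⟩
    ext c
    simp only [mem_filter, mem_univ, true_and, mem_insert, mem_singleton, Fin.ext_iff]
    unfold pairIndex
    omega
  · rw [card_eq_zero, filter_eq_empty_iff]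
    intro c _
    unfold pairIndex
    omega

def graphOnRows (n : ℕ) (g : Fin (2 * n + 2) → ℕ) : Finset (ℕ × ℕ) :=
  ({j | 1 ≤ (j : ℕ) ∧ (j : ℕ) ≤ 2 * n} : Finset (Fin (2 * n + 2))).image fun j => (g j, (j : ℕ))

section DellacGraph

variable {n : ℕ} {g : Fin (2 * n + 2) → ℕ}

theorem le_add_one_of_sameFiberCards (hfib : SameFiberCards g (pairIndex n))
    (j : Fin (2 * n + 2)) : g j ≤ n + 1 := by
  by_contra! h
  have := hfib (g j)
  rw [card_filter_pairIndex, if_neg (by omega), if_neg (by omega), card_eq_zero,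
    filter_eq_empty_iff] at this
  exact this (mem_univ j) rfl

theorem one_le_and_le_iff_of_sameFiberCards (hfib : SameFiberCards g (pairIndex n))
    (hstrip : ∀ j, InStrip n (g j) j) (j : Fin (2 * n + 2)) :
    (1 ≤ g j ∧ g j ≤ n) ↔ (1 ≤ (j : ℕ) ∧ (j : ℕ) ≤ 2 * n) := by
  have hle := le_add_one_of_sameFiberCards hfib
  have hfirst : g ⟨0, by omega⟩ = 0 := Nat.le_zero.mp (hstrip _).1
  have hlast : g ⟨2 * n + 1, by omega⟩ = n + 1 :=
    le_antisymm (hle _) (by have := (hstrip ⟨2 * n + 1, by omega⟩).2; simp only at this; omega)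
  have hfirst_iff := eq_iff_eq_of_card_filter_eq_one
    ((hfib 0).trans (by simp [card_filter_pairIndex])) hfirst j
  have hlast_iff := eq_iff_eq_of_card_filter_eq_one
    ((hfib (n + 1)).trans (by simp [card_filter_pairIndex])) hlast j
  simp only [Fin.ext_iff] at hfirst_iff hlast_iff
  have := hle j
  omega

theorem mem_graphOnRows {p : ℕ × ℕ} :
    p ∈ graphOnRows n g ↔
      ∃ j : Fin (2 * n + 2), (1 ≤ (j : ℕ) ∧ (j : ℕ) ≤ 2 * n) ∧ (g j, (j : ℕ)) = p := by
  simp [graphOnRows]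

theorem card_filter_fst_graphOnRows
    (hrange : ∀ j, (1 ≤ g j ∧ g j ≤ n) ↔ (1 ≤ (j : ℕ) ∧ (j : ℕ) ≤ 2 * n)) {l : ℕ}
    (hl₁ : 1 ≤ l) (hl₂ : l ≤ n) :
    #{p ∈ graphOnRows n g | p.1 = l} = #{j | g j = l} := by
  rw [graphOnRows, filter_image,
    card_image_of_injective _ fun j j' h => Fin.ext (congrArg Prod.snd h), filter_filter]
  congr 1
  ext j
  simp only [mem_filter, mem_univ, true_and]
  exact ⟨fun h => h.2, fun h => ⟨(hrange j).1 (by omega), h⟩⟩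

theorem card_filter_snd_graphOnRows {j : ℕ} (hj₁ : 1 ≤ j) (hj₂ : j ≤ 2 * n) :
    #{p ∈ graphOnRows n g | p.2 = j} = 1 := by
  rw [card_eq_one]
  refine ⟨(g ⟨j, by omega⟩, j), ?_⟩
  ext p
  simp only [mem_filter, mem_graphOnRows, mem_singleton]
  constructor
  · rintro ⟨⟨j', -, rfl⟩, rfl⟩
    rfl
  · rintro rfl
    exact ⟨⟨⟨j, by omega⟩, ⟨hj₁, hj₂⟩, rfl⟩, rfl⟩

theorem isDellac_graphOnRows (hfib : SameFiberCards g (pairIndex n))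
    (hstrip : ∀ j, InStrip n (g j) j) : IsDellac n (graphOnRows n g) := by
  have hrange := one_le_and_le_iff_of_sameFiberCards hfib hstrip
  refine ⟨fun l hl₁ hl₂ => ?_, fun j hj₁ hj₂ => card_filter_snd_graphOnRows hj₁ hj₂, ?_⟩
  · rw [card_filter_fst_graphOnRows hrange hl₁ hl₂, hfib, card_filter_pairIndex,
      if_neg (by omega), if_pos hl₂]
  · intro p hp
    obtain ⟨j, hj, rfl⟩ := mem_graphOnRows.mp hp
    exact ⟨((hrange j).2 hj).1, ((hrange j).2 hj).2, hstrip j⟩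

theorem eq_of_graphOnRows_eq {g' : Fin (2 * n + 2) → ℕ}
    (hfib : SameFiberCards g (pairIndex n)) (hstrip : ∀ j, InStrip n (g j) j)
    (hfib' : SameFiberCards g' (pairIndex n)) (hstrip' : ∀ j, InStrip n (g' j) j)
    (h : graphOnRows n g = graphOnRows n g') : g = g' := by
  funext j
  by_cases hj : 1 ≤ (j : ℕ) ∧ (j : ℕ) ≤ 2 * n
  · obtain ⟨j', -, hj'⟩ := mem_graphOnRows.mp (h ▸ mem_graphOnRows.mpr ⟨j, hj, rfl⟩)
    obtain rfl : j' = j := Fin.ext (congrArg Prod.snd hj')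
    exact (congrArg Prod.fst hj').symm
  · have := le_add_one_of_sameFiberCards hfib j
    have := le_add_one_of_sameFiberCards hfib' j
    have := hstrip j
    have := hstrip' j
    unfold InStrip at *
    omega

theorem sameFiberCards_of_isDellac_graphOnRows (hD : IsDellac n (graphOnRows n g))
    (hfirst : ∀ j : Fin (2 * n + 2), (j : ℕ) = 0 → g j = 0)
    (hlast : ∀ j : Fin (2 * n + 2), (j : ℕ) = 2 * n + 1 → g j = n + 1) :
    SameFiberCards g (pairIndex n) := by
  have hrange : ∀ j, (1 ≤ g j ∧ g j ≤ n) ↔ (1 ≤ (j : ℕ) ∧ (j : ℕ) ≤ 2 * n) := by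
    intro j
    by_cases hj : 1 ≤ (j : ℕ) ∧ (j : ℕ) ≤ 2 * n
    · have := hD.2.2 _ (mem_graphOnRows.mpr ⟨j, hj, rfl⟩)
      exact iff_of_true ⟨this.1, this.2.1⟩ hj
    · have := hfirst j
      have := hlast j
      omega
  intro b
  by_cases hb : 1 ≤ b ∧ b ≤ n
  · rw [← card_filter_fst_graphOnRows hrange hb.1 hb.2, hD.1 b hb.1 hb.2, card_filter_pairIndex,
      if_neg (by omega), if_pos hb.2]
  · congr 1
    ext j
    simp only [mem_filter, mem_univ, true_and]
    have := hrange j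
    have := hfirst j
    have := hlast j
    unfold pairIndex
    omega

theorem IsDellac.eq_of_mem_of_mem {D : Finset (ℕ × ℕ)} (hD : IsDellac n D) {l l' j : ℕ}
    (h : (l, j) ∈ D) (h' : (l', j) ∈ D) : l = l' := by
  have := hD.2.2 _ h
  exact congrArg Prod.fst (card_le_one.mp (hD.2.1 j (by omega) (by omega)).le _
    (mem_filter.mpr ⟨h, rfl⟩) _ (mem_filter.mpr ⟨h', rfl⟩))

theorem IsDellac.exists_mem {D : Finset (ℕ × ℕ)} (hD : IsDellac n D) {j : ℕ} (hj₁ : 1 ≤ j)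
    (hj₂ : j ≤ 2 * n) : ∃ l, (l, j) ∈ D := by
  obtain ⟨p, hp⟩ := card_pos.mp ((hD.2.1 j hj₁ hj₂).symm ▸ Nat.one_pos)
  obtain ⟨hpD, rfl⟩ := mem_filter.mp hp
  exact ⟨p.1, hpD⟩

theorem exists_graphOnRows_eq {D : Finset (ℕ × ℕ)} (hD : IsDellac n D) :
    ∃ g : Fin (2 * n + 2) → ℕ,
      (SameFiberCards g (pairIndex n) ∧ ∀ j, InStrip n (g j) j) ∧ graphOnRows n g = D := by
  have : ∀ j : Fin (2 * n + 2), ∃ l, ((1 ≤ (j : ℕ) ∧ (j : ℕ) ≤ 2 * n) → (l, (j : ℕ)) ∈ D) ∧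
      ((j : ℕ) = 0 → l = 0) ∧ ((j : ℕ) = 2 * n + 1 → l = n + 1) := by
    intro j
    by_cases hj : 1 ≤ (j : ℕ) ∧ (j : ℕ) ≤ 2 * n
    · obtain ⟨l, hl⟩ := hD.exists_mem hj.1 hj.2
      exact ⟨l, fun _ => hl, by omega, by omega⟩
    · by_cases hj₀ : (j : ℕ) = 0
      · exact ⟨0, by omega, fun _ => rfl, by omega⟩
      · exact ⟨n + 1, by omega, by omega, fun _ => rfl⟩
  choose g hmem hfirst hlast using this
  have hgD : graphOnRows n g = D := by
    ext ⟨l, j⟩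
    rw [mem_graphOnRows]
    refine ⟨fun ⟨j', hj', hj'lj⟩ => hj'lj ▸ hmem j' hj', fun hlj => ?_⟩
    have := hD.2.2 _ hlj
    simp only at this
    refine ⟨⟨j, by omega⟩, by simp only; omega, ?_⟩
    rw [hD.eq_of_mem_of_mem (hmem ⟨j, by omega⟩ (by simp only; omega)) hlj]
  refine ⟨g, ⟨sameFiberCards_of_isDellac_graphOnRows (hgD ▸ hD) hfirst hlast, fun j => ?_⟩, hgD⟩
  by_cases hj : 1 ≤ (j : ℕ) ∧ (j : ℕ) ≤ 2 * n
  · exact (hD.2.2 _ (hmem j hj)).2.2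
  · have := hfirst j
    have := hlast j
    unfold InStrip
    omega

theorem card_strip_eq_card_dellac (n : ℕ) :
    Nat.card {g : Fin (2 * n + 2) → ℕ //
        SameFiberCards g (pairIndex n) ∧ ∀ j, InStrip n (g j) j} =
      Nat.card {D : Finset (ℕ × ℕ) // IsDellac n D} := by
  refine Nat.card_eq_of_bijective (fun g => ⟨graphOnRows n g, isDellac_graphOnRows g.2.1 g.2.2⟩)
    ⟨fun g g' h => Subtype.ext (eq_of_graphOnRows_eq g.2.1 g.2.2 g'.2.1 g'.2.2
      (congrArg Subtype.val h)), fun D => ?_⟩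
  obtain ⟨g, hg, hgD⟩ := exists_graphOnRows_eq D.2
  exact ⟨⟨g, hg⟩, Subtype.ext hgD⟩

end DellacGraph

theorem card_pd2n_eq_card_dellac_general (n : ℕ) :
    Nat.card {σ : Equiv.Perm (Fin (2 * n + 2)) // IsPD2N n σ} =
      Nat.card {D : Finset (ℕ × ℕ) // IsDellac n D} :=
  calc Nat.card {σ : Equiv.Perm (Fin (2 * n + 2)) // IsPD2N n σ}
      = Nat.card {σ : Equiv.Perm (Fin (2 * n + 2)) // StrictMonoOnFibers (pairIndex n) σ.symm ∧
          ∀ p, InStrip n (pairIndex n (σ p)) (dumontRow n p)} :=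
        Nat.card_congr (Equiv.subtypeEquivRight isPD2N_iff)
    _ = Nat.card {f : Fin (2 * n + 2) → ℕ //
          SameFiberCards f (pairIndex n) ∧ ∀ p, InStrip n (f p) (dumontRow n p)} :=
        card_strictMonoOnFibers_eq (pairIndex n)
          fun (f : Fin (2 * n + 2) → ℕ) => ∀ p, InStrip n (f p) (dumontRow n p)
    _ = Nat.card {g : Fin (2 * n + 2) → ℕ //
          SameFiberCards g (pairIndex n) ∧ ∀ j, InStrip n (g j) j} :=
        card_dumontRow_strip_eq_card_strip n
    _ = Nat.card {D : Finset (ℕ × ℕ) // IsDellac n D} := card_strip_eq_card_dellac n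

/-- For every positive integer `n`, the number of normalized Dumont permutations
of the second kind on `{1, …, 2n+2}` equals the number of Dellac configurations
of size `n`. -/
theorem card_pd2n_eq_card_dellac (n : ℕ) (hn : 1 ≤ n) :
    Nat.card {σ : Equiv.Perm (Fin (2 * n + 2)) // IsPD2N n σ} =
      Nat.card {D : Finset (ℕ × ℕ) // IsDellac n D} :=
  card_pd2n_eq_card_dellac_general n
end

section
/- Let 1 ≤ d_1 < … < d_s ≤ n−1 and let V_1,…,V_s be subspaces of ℂ^n with dim V_l = d_l. Then pr_{d_l+1, d_m}(V_l) ⊆ V_m holds for all pairs 1 ≤ l < m ≤ s if and only if pr_{d_l+1, d_{l+1}}(V_l) ⊆ V_{l+1} holds for all l = 1,…,s−1. -/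
/-- The projection `pr_{a,b} : ℂⁿ → ℂⁿ` setting the (1-based) coordinates
`a, …, b` to zero; if `a > b` it is the identity. -/
noncomputable def pr (n a b : ℕ) : (Fin n → ℂ) →ₗ[ℂ] (Fin n → ℂ) :=
  LinearMap.pi fun i : Fin n =>
    if a ≤ (i : ℕ) + 1 ∧ (i : ℕ) + 1 ≤ b then 0 else LinearMap.proj i

lemma pr_apply (n a b : ℕ) (x : Fin n → ℂ) (i : Fin n) :
    pr n a b x i = if a ≤ (i : ℕ) + 1 ∧ (i : ℕ) + 1 ≤ b then 0 else x i := by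
  simp only [pr, LinearMap.pi_apply]
  split <;> simp_all

lemma pr_comp (n a b c : ℕ) (hab : a ≤ b) (hbc : b ≤ c) :
    (pr n (b + 1) c).comp (pr n (a + 1) b) = pr n (a + 1) c := by
  ext x i
  simp only [LinearMap.comp_apply, pr_apply]
  split_ifs
  all_goals try rfl
  all_goals omega

/-- For `1 ≤ d_1 < … < d_s ≤ n-1` and subspaces `V_1, …, V_s ⊆ ℂⁿ` with
`dim V_l = d_l`: the conditions `pr_{d_l+1, d_m}(V_l) ⊆ V_m` for all pairs
`1 ≤ l < m ≤ s` hold if and only if the consecutive conditions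
`pr_{d_l+1, d_{l+1}}(V_l) ⊆ V_{l+1}` for `l = 1, …, s-1` hold. -/
theorem chain_conditions_iff_consecutive (n s : ℕ) (d : Fin s → ℕ)
    (hmono : StrictMono d) (hd1 : ∀ l, 1 ≤ d l) (hdn : ∀ l, d l ≤ n - 1)
    (V : Fin s → Submodule ℂ (Fin n → ℂ))
    (hdim : ∀ l, Module.finrank ℂ (V l) = d l) :
    (∀ l m : Fin s, l < m →
        Submodule.map (pr n (d l + 1) (d m)) (V l) ≤ V m) ↔
    (∀ (l : ℕ) (h : l + 1 < s),
        Submodule.map (pr n (d ⟨l, by omega⟩ + 1) (d ⟨l + 1, h⟩)) (V ⟨l, by omega⟩)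
          ≤ V ⟨l + 1, h⟩) := by
  constructor
  · intro h l hl
    exact h ⟨l, by omega⟩ ⟨l + 1, hl⟩ (by simp [Fin.lt_def])
  · intro h
    have key : ∀ k (hk : k < s) (l : Fin s), (l : ℕ) < k →
        Submodule.map (pr n (d l + 1) (d ⟨k, hk⟩)) (V l) ≤ V ⟨k, hk⟩ := by
      intro k
      induction k with
      | zero => omega
      | succ k ih =>
        intro hk l hl
        rcases Nat.lt_succ_iff_lt_or_eq.mp hl with hl' | hl'
        · have hk' : k < s := by omega
          have hcomp := pr_comp n (d l) (d ⟨k, hk'⟩) (d ⟨k + 1, hk⟩)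
            (le_of_lt (hmono (show l < ⟨k, hk'⟩ from hl'))) (le_of_lt (hmono (by simp [Fin.lt_def])))
          calc Submodule.map (pr n (d l + 1) (d ⟨k + 1, hk⟩)) (V l)
              = Submodule.map (pr n (d ⟨k, hk'⟩ + 1) (d ⟨k + 1, hk⟩))
                  (Submodule.map (pr n (d l + 1) (d ⟨k, hk'⟩)) (V l)) := by
                rw [← Submodule.map_comp, hcomp]
            _ ≤ Submodule.map (pr n (d ⟨k, hk'⟩ + 1) (d ⟨k + 1, hk⟩)) (V ⟨k, hk'⟩) :=
                Submodule.map_mono (ih hk' l hl')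
            _ ≤ V ⟨k + 1, hk⟩ := h k hk
        · obtain ⟨lv, hlv⟩ := l
          dsimp only at hl'
          subst hl'
          exact h lv hk
    intro l m hlm
    have := key (m : ℕ) m.isLt l hlm
    simpa using this
end

section
/- Let n ≥ 2 and let s_{i,j} ∈ ℂ be arbitrary scalars for 1 ≤ i ≤ j ≤ n−1. For each d = 1,…,n−1 let V_d ⊆ ℂ^n be the span of the d vectors v_k + Σ_{j=d}^{n−1} s_{k,j} v_{j+1}, k = 1,…,d. Then dim V_d = d for every d, and pr_{d+1, d'}(V_d) ⊆ V_{d'} for all 1 ≤ d < d' ≤ n−1. -/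
/-- The standard basis vector `v_m` of `ℂⁿ` (1-based: `v_m` has a `1` in the
`m`-th position, `1 ≤ m ≤ n`, and is zero elsewhere). -/
noncomputable def stdv (n m : ℕ) : Fin n → ℂ := fun i => if (i : ℕ) + 1 = m then 1 else 0

lemma pr_stdv (n a b m : ℕ) :
    pr n a b (stdv n m) = if a ≤ m ∧ m ≤ b then 0 else stdv n m := by
  funext i
  simp only [pr, LinearMap.pi_apply]
  by_cases hi : (i : ℕ) + 1 = m
  · subst hi
    split_ifs <;> simp_all [stdv]
  · split_ifs <;> simp_all [stdv]

noncomputable def bigCellGen (n : ℕ) (s : ℕ → ℕ → ℂ) (d k : ℕ) : Fin n → ℂ :=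
  stdv n k + ∑ j ∈ Finset.Icc d (n - 1), s k j • stdv n (j + 1)

noncomputable def bigCellSpace (n : ℕ) (s : ℕ → ℕ → ℂ) (d : ℕ) : Submodule ℂ (Fin n → ℂ) :=
  Submodule.span ℂ {x | ∃ k, 1 ≤ k ∧ k ≤ d ∧ x = bigCellGen n s d k}

section

variable {n : ℕ} (s : ℕ → ℕ → ℂ)

lemma bigCellGen_apply_of_lt {d : ℕ} (k : ℕ) {i : Fin n} (hi : (i : ℕ) < d) :
    bigCellGen n s d k i = stdv n k i := by
  have hvanish : ∀ j ∈ Finset.Icc d (n - 1), s k j • stdv n (j + 1) i = 0 := by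
    intro j hj
    rw [stdv, if_neg (by grind), smul_zero]
  simp only [bigCellGen, Pi.add_apply, Finset.sum_apply, Pi.smul_apply, Finset.sum_eq_zero hvanish,
    add_zero]

lemma linearIndependent_bigCellGen {d : ℕ} (hd : d ≤ n) :
    LinearIndependent ℂ fun k : Fin d => bigCellGen n s d (k + 1) := by
  refine LinearIndependent.of_comp (LinearMap.funLeft ℂ ℂ (Fin.castLE hd)) ?_
  convert (Pi.basisFun ℂ (Fin d)).linearIndependent using 1
  funext k i
  simp only [Function.comp_apply, LinearMap.funLeft_apply, Pi.basisFun_apply,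
    bigCellGen_apply_of_lt s _ (show (Fin.castLE hd i : ℕ) < d from i.isLt), stdv,
    Fin.val_castLE, Pi.single_apply, Fin.ext_iff]
  grind

lemma bigCellSpace_eq_span_range (d : ℕ) :
    bigCellSpace n s d = Submodule.span ℂ (Set.range fun k : Fin d => bigCellGen n s d (k + 1)) := by
  refine congrArg _ (Set.ext fun x => ?_)
  constructor
  · rintro ⟨k, hk1, hkd, rfl⟩
    exact ⟨⟨k - 1, by omega⟩, by simp only [Nat.sub_add_cancel hk1]⟩
  · rintro ⟨k, rfl⟩
    exact ⟨k + 1, by omega, k.isLt, rfl⟩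

lemma finrank_bigCellSpace {d : ℕ} (hd : d ≤ n) : Module.finrank ℂ (bigCellSpace n s d) = d := by
  rw [bigCellSpace_eq_span_range, finrank_span_eq_card (linearIndependent_bigCellGen s hd),
    Fintype.card_fin]

lemma pr_bigCellGen {d d' k : ℕ} (hkd : k ≤ d) (hdd' : d ≤ d') :
    pr n (d + 1) d' (bigCellGen n s d k) = bigCellGen n s d' k := by
  simp only [bigCellGen, map_add, map_sum, map_smul, pr_stdv]
  rw [if_neg (by omega)]
  congr 1
  refine (Finset.sum_subset (Finset.Icc_subset_Icc_left hdd') fun j hj hj' => ?_).symm.trans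
    (Finset.sum_congr rfl fun j hj => ?_)
  · rw [if_pos (by grind), smul_zero]
  · rw [if_neg (by grind)]

lemma map_pr_bigCellSpace_le {d d' : ℕ} (hdd' : d ≤ d') :
    (bigCellSpace n s d).map (pr n (d + 1) d') ≤ bigCellSpace n s d' := by
  rw [bigCellSpace, Submodule.map_span, Submodule.span_le]
  rintro _ ⟨_, ⟨k, hk1, hkd, rfl⟩, rfl⟩
  exact Submodule.subset_span ⟨k, hk1, hkd.trans hdd', pr_bigCellGen s hkd hdd'⟩

end

theorem bigCell_chain_general (n : ℕ) (s : ℕ → ℕ → ℂ)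
    (V : ℕ → Submodule ℂ (Fin n → ℂ))
    (hV : ∀ d, V d = Submodule.span ℂ
      {x | ∃ k, 1 ≤ k ∧ k ≤ d ∧
        x = stdv n k + ∑ j ∈ Finset.Icc d (n - 1), s k j • stdv n (j + 1)}) :
    (∀ d, 1 ≤ d → d ≤ n - 1 → Module.finrank ℂ (V d) = d) ∧
    (∀ d d', 1 ≤ d → d < d' → d' ≤ n - 1 →
      Submodule.map (pr n (d + 1) d') (V d) ≤ V d') := by
  have hV' : ∀ d, V d = bigCellSpace n s d := hV
  refine ⟨fun d _ hd => ?_, fun d d' _ hdd' _ => ?_⟩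
  · rw [hV']
    exact finrank_bigCellSpace s (by omega)
  · rw [hV', hV']
    exact map_pr_bigCellSpace_le s hdd'.le

/-- Let `n ≥ 2` and let `s_{i,j} ∈ ℂ` be arbitrary scalars. For `d = 1, …, n-1`
let `V_d ⊆ ℂⁿ` be the span of the `d` vectors
`v_k + Σ_{j=d}^{n-1} s_{k,j} v_{j+1}`, `k = 1, …, d`. Then `dim V_d = d` for
every `d`, and `pr_{d+1, d'}(V_d) ⊆ V_{d'}` for all `1 ≤ d < d' ≤ n-1`. -/
theorem bigCell_chain (n : ℕ) (hn : 2 ≤ n) (s : ℕ → ℕ → ℂ)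
    (V : ℕ → Submodule ℂ (Fin n → ℂ))
    (hV : ∀ d, V d = Submodule.span ℂ
      {x | ∃ k, 1 ≤ k ∧ k ≤ d ∧
        x = stdv n k + ∑ j ∈ Finset.Icc d (n - 1), s k j • stdv n (j + 1)}) :
    (∀ d, 1 ≤ d → d ≤ n - 1 → Module.finrank ℂ (V d) = d) ∧
    (∀ d d', 1 ≤ d → d < d' → d' ≤ n - 1 →
      Submodule.map (pr n (d + 1) d') (V d) ≤ V d') :=
  bigCell_chain_general n s V hV
end

section
/- Fix 1 ≤ d ≤ n−1. For every d-dimensional subspace W ⊆ ℂ^n there exist a unique increasing tuple L = (l_1 < … < l_d) in {1,…,n} and unique scalars a_{i,j} ∈ ℂ (for j = 1,…,d and i ∈ F_j(L)) such that the vectors e_j = v_{l_j} + Σ_{i ∈ F_j(L)} a_{i,j} v_i, j = 1,…,d, form a basis of W. Consequently the set of d-dimensional subspaces of ℂ^n is the disjoint union, over increasing tuples L, of the affine cells consisting of the subspaces of this normal form. -/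
/-- The set of free positions `F_j(L)` attached to an increasing tuple
`L = (l_1 < … < l_d)` in `{1, …, n}`:
`F_j(L) = ({1, …, l_j - 1} ∪ {d+1, …, n}) \ {l_1, …, l_d}` if `l_j ≤ d`, and
`F_j(L) = {d+1, …, l_j - 1} \ {l_1, …, l_d}` if `l_j > d`. -/
def freePos (n d : ℕ) (l : Fin d → ℕ) (j : Fin d) : Finset ℕ :=
  (if l j ≤ d then Finset.Ico 1 (l j) ∪ Finset.Icc (d + 1) n
   else Finset.Ico (d + 1) (l j)) \ Finset.image l Finset.univ


def wgt (n d m : ℕ) : ℕ := if m ≤ d then m + n else m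

lemma wgt_inj {n d a b : ℕ} (ha1 : 1 ≤ a) (ha : a ≤ n) (hb1 : 1 ≤ b) (hb : b ≤ n)
    (h : wgt n d a = wgt n d b) : a = b := by
  unfold wgt at h; split_ifs at h <;> omega

/-- Truncation submodule: vectors supported on positions of weight ≤ t. -/
noncomputable def trunc (n d t : ℕ) : Submodule ℂ (Fin n → ℂ) where
  carrier := {v | ∀ i : Fin n, t < wgt n d ((i : ℕ) + 1) → v i = 0}
  add_mem' := by intro a b ha hb i hi; simp only [Pi.add_apply, ha i hi, hb i hi, add_zero]
  zero_mem' := by intro i hi; rfl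
  smul_mem' := by intro c a ha i hi; simp only [Pi.smul_apply, ha i hi, smul_zero]

lemma mem_trunc {n d t : ℕ} {v : Fin n → ℂ} :
    v ∈ trunc n d t ↔ ∀ i : Fin n, t < wgt n d ((i : ℕ) + 1) → v i = 0 := Iff.rfl

open Classical in
/-- The pivot set of W. -/
noncomputable def pivSet (n d : ℕ) (W : Submodule ℂ (Fin n → ℂ)) : Finset (Fin n) :=
  Finset.univ.filter (fun p =>
    ∃ v ∈ W, v ∈ trunc n d (wgt n d ((p : ℕ) + 1)) ∧ v p ≠ 0)

lemma mem_pivSet {n d : ℕ} {W : Submodule ℂ (Fin n → ℂ)} {p : Fin n} :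
    p ∈ pivSet n d W ↔ ∃ v ∈ W, v ∈ trunc n d (wgt n d ((p : ℕ) + 1)) ∧ v p ≠ 0 := by
  simp [pivSet]

/-- Every nonzero vector of W has its top coordinate at a pivot. -/
lemma exists_top {n d : ℕ} {W : Submodule ℂ (Fin n → ℂ)} {v : Fin n → ℂ}
    (hv : v ∈ W) (hv0 : v ≠ 0) :
    ∃ p ∈ pivSet n d W, v p ≠ 0 ∧ v ∈ trunc n d (wgt n d ((p : ℕ) + 1)) := by
  classical
  have hne : (Finset.univ.filter (fun i : Fin n => v i ≠ 0)).Nonempty := by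
    by_contra h
    apply hv0
    funext i
    by_contra hi
    exact h ⟨i, Finset.mem_filter.2 ⟨Finset.mem_univ _, hi⟩⟩
  obtain ⟨p, hp, hmax⟩ := Finset.exists_max_image _ (fun i : Fin n => wgt n d ((i : ℕ) + 1)) hne
  have hvp : v p ≠ 0 := (Finset.mem_filter.1 hp).2
  have htr : v ∈ trunc n d (wgt n d ((p : ℕ) + 1)) := by
    intro i hi
    by_contra hvi
    exact absurd (hmax i (Finset.mem_filter.2 ⟨Finset.mem_univ _, hvi⟩)) (by omega)
  exact ⟨p, mem_pivSet.2 ⟨v, hv, htr, hvp⟩, hvp, htr⟩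

/-- A vector of W vanishing at all pivots is zero. -/
lemma eq_zero_of_pivots_zero {n d : ℕ} {W : Submodule ℂ (Fin n → ℂ)} {v : Fin n → ℂ}
    (hv : v ∈ W) (h : ∀ p ∈ pivSet n d W, v p = 0) : v = 0 := by
  by_contra hv0
  obtain ⟨p, hp, hvp, -⟩ := exists_top (d := d) hv hv0
  exact hvp (h p hp)

/-- A vector of W vanishing at all pivots above p is in the truncation at p. -/
lemma mem_trunc_of_pivots_zero {n d : ℕ} {W : Submodule ℂ (Fin n → ℂ)} {v : Fin n → ℂ}
    (hv : v ∈ W) (t : ℕ)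
    (h : ∀ p ∈ pivSet n d W, t < wgt n d ((p : ℕ) + 1) → v p = 0) :
    v ∈ trunc n d t := by
  by_cases hv0 : v = 0
  · subst hv0; exact (trunc n d t).zero_mem
  obtain ⟨p, hp, hvp, htr⟩ := exists_top (d := d) hv hv0
  intro i hi
  by_contra hvi
  have h1 : wgt n d ((i : ℕ) + 1) ≤ wgt n d ((p : ℕ) + 1) := by
    by_contra hc
    exact hvi (htr i (by omega))
  exact hvp (h p hp (by omega))

open Module

/-- The projection of W onto the pivot coordinates. -/
noncomputable def pivProj (n d : ℕ) (W : Submodule ℂ (Fin n → ℂ)) :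
    W →ₗ[ℂ] ({x : Fin n // x ∈ pivSet n d W} → ℂ) where
  toFun v := fun p => v.1 p.1
  map_add' v w := rfl
  map_smul' c v := rfl

lemma pivProj_injective (n d : ℕ) (W : Submodule ℂ (Fin n → ℂ)) :
    Function.Injective (pivProj n d W) := by
  rw [← LinearMap.ker_eq_bot, eq_bot_iff]
  rintro ⟨v, hv⟩ hker
  have h0 : v = 0 := by
    refine eq_zero_of_pivots_zero (d := d) hv fun p hp => ?_
    exact congrFun (LinearMap.mem_ker.1 hker) ⟨p, hp⟩
  simpa [Submodule.mem_bot, Subtype.ext_iff] using h0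

/-- A family of vectors with distinct tops is linearly independent. -/
lemma indep_of_tops {n d : ℕ} {ι : Type*}
    (u : ι → (Fin n → ℂ)) (t : ι → Fin n) (hti : Function.Injective t)
    (htr : ∀ i, u i ∈ trunc n d (wgt n d ((t i : ℕ) + 1)) ∧ u i (t i) ≠ 0) :
    LinearIndependent ℂ u := by
  classical
  rw [linearIndependent_iff']
  intro s g hsum i hi
  by_contra hgi
  have hne : (s.filter (fun i => g i ≠ 0)).Nonempty := ⟨i, Finset.mem_filter.2 ⟨hi, hgi⟩⟩
  obtain ⟨m, hm, hmax⟩ := Finset.exists_max_image _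
    (fun i => wgt n d ((t i : ℕ) + 1)) hne
  have hgm : g m ≠ 0 := (Finset.mem_filter.1 hm).2
  have hms : m ∈ s := (Finset.mem_filter.1 hm).1
  have heval : (∑ i ∈ s, g i • u i) (t m) = g m * u m (t m) := by
    rw [Finset.sum_apply]
    rw [Finset.sum_eq_single m]
    · simp
    · intro b hb hbm
      by_cases hgb : g b = 0
      · simp [hgb]
      have hwle : wgt n d ((t b : ℕ) + 1) ≤ wgt n d ((t m : ℕ) + 1) :=
        hmax b (Finset.mem_filter.2 ⟨hb, hgb⟩)
      have hwne : wgt n d ((t b : ℕ) + 1) ≠ wgt n d ((t m : ℕ) + 1) := by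
        intro h
        have := wgt_inj (a := (t b : ℕ) + 1) (b := (t m : ℕ) + 1)
          (by omega) (by have := (t b).isLt; omega) (by omega)
          (by have := (t m).isLt; omega) h
        exact hbm (hti (Fin.ext (by omega)))
      have : u b (t m) = 0 := (htr b).1 (t m) (by omega)
      simp [this]
    · intro h; exact absurd hms h
  rw [hsum] at heval
  have : u m (t m) ≠ 0 := (htr m).2
  have := heval.symm
  simp only [Pi.zero_apply] at this
  rcases mul_eq_zero.1 this with h | h
  · exact hgm h
  · exact (htr m).2 h

lemma card_pivSet (n d : ℕ) (W : Submodule ℂ (Fin n → ℂ)) (hW : finrank ℂ W = d) :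
    (pivSet n d W).card = d := by
  classical
  have hle : (pivSet n d W).card ≤ d := by
    set u : {x : Fin n // x ∈ pivSet n d W} → (Fin n → ℂ) :=
      fun p => (mem_pivSet.1 p.2).choose with hu
    have hspec : ∀ p, u p ∈ W ∧ u p ∈ trunc n d (wgt n d ((p.1 : ℕ) + 1)) ∧ u p p.1 ≠ 0 :=
      fun p => (mem_pivSet.1 p.2).choose_spec
    have hind : LinearIndependent ℂ u :=
      indep_of_tops u (fun p => p.1) (fun p q h => Subtype.ext h)
        (fun p => ⟨(hspec p).2.1, (hspec p).2.2⟩)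
    have hind' : LinearIndependent ℂ (fun p => (⟨u p, (hspec p).1⟩ : W)) := by
      apply LinearIndependent.of_comp W.subtype
      exact hind
    have := hind'.fintype_card_le_finrank
    rwa [Fintype.card_coe, hW] at this
  have hge : d ≤ (pivSet n d W).card := by
    have := LinearMap.finrank_le_finrank_of_injective (pivProj_injective n d W)
    rwa [hW, Module.finrank_fintype_fun_eq_card, Fintype.card_coe] at this
  omega

lemma core (n d : ℕ) (W : Submodule ℂ (Fin n → ℂ)) (hW : finrank ℂ W = d) :
    ∃ e : {x : Fin n // x ∈ pivSet n d W} → (Fin n → ℂ),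
      (∀ p, e p ∈ W) ∧
      (∀ p (q : {x : Fin n // x ∈ pivSet n d W}), e p q.1 = if q.1 = p.1 then 1 else 0) ∧
      (∀ p, e p ∈ trunc n d (wgt n d ((p.1 : ℕ) + 1))) ∧
      LinearIndependent ℂ e ∧
      Submodule.span ℂ (Set.range e) = W ∧
      (∀ f : {x : Fin n // x ∈ pivSet n d W} → (Fin n → ℂ),
        (∀ p, f p ∈ W) → (∀ p (q : {x : Fin n // x ∈ pivSet n d W}), f p q.1 = if q.1 = p.1 then 1 else 0) → f = e) := by
  classical
  have hcard := card_pivSet n d W hW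
  have hdim : finrank ℂ W = finrank ℂ ({x : Fin n // x ∈ pivSet n d W} → ℂ) := by
    rw [hW, Module.finrank_fintype_fun_eq_card, Fintype.card_coe, hcard]
  set ψ := (pivProj n d W).linearEquivOfInjective (pivProj_injective n d W) hdim with hψ
  have hψap : ∀ v : W, ∀ q, (ψ v) q = v.1 q.1 := fun v q => rfl
  set E : {x : Fin n // x ∈ pivSet n d W} → W := fun p => ψ.symm (Pi.single p 1) with hE
  set e : {x : Fin n // x ∈ pivSet n d W} → (Fin n → ℂ) := fun p => (E p).1 with he
  have hmem : ∀ p, e p ∈ W := fun p => (E p).2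
  have hcoords : ∀ p (q : {x : Fin n // x ∈ pivSet n d W}), e p q.1 = if q.1 = p.1 then 1 else 0 := by
    intro p q
    have : ψ (E p) = Pi.single p 1 := ψ.apply_symm_apply _
    have h2 := congrFun this q
    rw [hψap] at h2
    rw [show e p q.1 = (E p).1 q.1 from rfl, h2, Pi.single_apply]
    by_cases h : q = p
    · simp [h]
    · have : q.1 ≠ p.1 := fun hv => h (Subtype.ext hv)
      simp [h, this]
  have huniq : ∀ f : {x : Fin n // x ∈ pivSet n d W} → (Fin n → ℂ),
      (∀ p, f p ∈ W) → (∀ p (q : {x : Fin n // x ∈ pivSet n d W}), f p q.1 = if q.1 = p.1 then 1 else 0) → f = e := by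
    intro f hfW hfc
    funext p
    have hsub : f p - e p = 0 := by
      refine eq_zero_of_pivots_zero (d := d) (sub_mem (hfW p) (hmem p)) fun q hq => ?_
      have := hfc p ⟨q, hq⟩
      have h2 := hcoords p ⟨q, hq⟩
      simp only [Pi.sub_apply]
      rw [this, h2, sub_self]
    have := sub_eq_zero.1 hsub
    exact this
  have htrunc : ∀ p, e p ∈ trunc n d (wgt n d ((p.1 : ℕ) + 1)) := by
    intro p
    refine mem_trunc_of_pivots_zero (hmem p) _ fun q hq hw => ?_
    have h2 := hcoords p ⟨q, hq⟩
    have : (q : ℕ) ≠ (p.1 : ℕ) := by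
      intro h
      rw [h] at hw; omega
    have hne : q ≠ p.1 := fun h => this (by rw [h])
    simpa [Fin.val_eq_val, hne] using h2
  have hindep : LinearIndependent ℂ e := by
    have h1 : LinearIndependent ℂ (Pi.basisFun ℂ {x : Fin n // x ∈ pivSet n d W}) :=
      (Pi.basisFun ℂ _).linearIndependent
    have h2 : LinearIndependent ℂ E := by
      have : E = fun p => ψ.symm (Pi.basisFun ℂ _ p) := by
        funext p; rw [hE]; simp [Pi.basisFun_apply]
      rw [this]
      exact h1.map' ψ.symm.toLinearMap ψ.symm.ker
    exact h2.map' W.subtype W.ker_subtype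
  have hspan : Submodule.span ℂ (Set.range e) = W := by
    have hle : Submodule.span ℂ (Set.range e) ≤ W := by
      rw [Submodule.span_le]
      rintro x ⟨p, rfl⟩
      exact hmem p
    refine Submodule.eq_of_le_of_finrank_eq hle ?_
    rw [hW, finrank_span_eq_card hindep, Fintype.card_coe, hcard]
  exact ⟨e, hmem, hcoords, htrunc, hindep, hspan, huniq⟩

lemma freePos_iff (n d : ℕ) (hdn : d < n) (l : Fin d → ℕ) (hl : ∀ j, 1 ≤ l j ∧ l j ≤ n)
    (j : Fin d) (i : ℕ) :
    i ∈ freePos n d l j ↔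
      (1 ≤ i ∧ i ≤ n ∧ wgt n d i < wgt n d (l j) ∧ ∀ j', l j' ≠ i) := by
  have h1 := hl j
  unfold freePos wgt
  by_cases h : l j ≤ d <;>
    simp only [h, if_true, if_false, Finset.mem_sdiff, Finset.mem_union, Finset.mem_Ico,
      Finset.mem_Icc, Finset.mem_image, Finset.mem_univ, true_and, not_exists] <;>
    constructor
  · rintro ⟨h2, h3⟩
    refine ⟨by omega, by omega, ?_, fun j' e => h3 j' e⟩
    split_ifs <;> omega
  · rintro ⟨h2, h3, h4, h5⟩
    refine ⟨?_, fun j' e => h5 j' e⟩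
    split_ifs at h4 <;> omega
  · rintro ⟨h2, h3⟩
    refine ⟨by omega, by omega, ?_, fun j' e => h3 j' e⟩
    split_ifs <;> omega
  · rintro ⟨h2, h3, h4, h5⟩
    refine ⟨?_, fun j' e => h5 j' e⟩
    split_ifs at h4 <;> omega

lemma eval_normal (n d : ℕ) (l : Fin d → ℕ) (b : ℕ → Fin d → ℂ) (j : Fin d) (k : Fin n) :
    (stdv n (l j) + ∑ i ∈ freePos n d l j, b i j • stdv n i) k
      = (if (k : ℕ) + 1 = l j then 1 else 0)
        + (if ((k : ℕ) + 1) ∈ freePos n d l j then b ((k : ℕ) + 1) j else 0) := by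
  classical
  simp only [Pi.add_apply, Finset.sum_apply, Pi.smul_apply, stdv, smul_eq_mul, mul_ite,
    mul_one, mul_zero]
  rw [Finset.sum_ite_eq]

/-- Every `d`-dimensional subspace `W ⊆ ℂⁿ` admits a unique increasing tuple
`L = (l_1 < … < l_d)` in `{1, …, n}` and unique scalars `a_{i,j}` (supported on
the free positions `i ∈ F_j(L)`) such that the vectors
`e_j = v_{l_j} + Σ_{i ∈ F_j(L)} a_{i,j} v_i`, `j = 1, …, d`, form a basis of
`W`. Consequently the Grassmannian of `d`-dimensional subspaces of `ℂⁿ` is the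
disjoint union over increasing tuples `L` of the affine cells of subspaces with
normal form of type `L`. -/
theorem grassmannian_cell_normal_form (n d : ℕ) (hd1 : 1 ≤ d) (hdn : d ≤ n - 1)
    (W : Submodule ℂ (Fin n → ℂ)) (hW : Module.finrank ℂ W = d) :
    ∃! La : (Fin d → ℕ) × (ℕ → Fin d → ℂ),
      StrictMono La.1 ∧ (∀ j, 1 ≤ La.1 j ∧ La.1 j ≤ n) ∧
      (∀ i j, i ∉ freePos n d La.1 j → La.2 i j = 0) ∧
      LinearIndependent ℂ
        (fun j => stdv n (La.1 j) + ∑ i ∈ freePos n d La.1 j, La.2 i j • stdv n i) ∧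
      Submodule.span ℂ (Set.range fun j =>
        stdv n (La.1 j) + ∑ i ∈ freePos n d La.1 j, La.2 i j • stdv n i) = W := by
  classical
  have hd : d < n := by omega
  obtain ⟨e, hmem, hcoords, htrunc, hindep, hspan, huniq⟩ := core n d W hW
  have hcard := card_pivSet n d W hW
  set piv : Fin d ≃o {x : Fin n // x ∈ pivSet n d W} := (pivSet n d W).orderIsoOfFin hcard with hpiv
  set L : Fin d → ℕ := fun j => ((piv j : Fin n) : ℕ) + 1 with hL
  have hLmono : StrictMono L := by
    intro j j' hj
    have := (piv.strictMono hj)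
    have : (piv j : Fin n) < (piv j' : Fin n) := this
    simp only [hL]
    omega
  have hLbnd : ∀ j, 1 ≤ L j ∧ L j ≤ n := by
    intro j
    have := (piv j : Fin n).isLt
    simp only [hL]
    omega
  have hmemF : ∀ {i : ℕ} {j : Fin d}, i ∈ freePos n d L j → i - 1 < n := by
    intro i j h
    have := (freePos_iff n d hd L hLbnd j i).1 h
    omega
  set a : ℕ → Fin d → ℂ := fun i j =>
    if h : i ∈ freePos n d L j then e (piv j) ⟨i - 1, hmemF h⟩ else 0 with ha
  -- k ∈ P iff k is in the range of piv
  have hPiff : ∀ k : Fin n, k ∈ pivSet n d W ↔ ∃ j', (piv j' : Fin n) = k := by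
    intro k
    constructor
    · intro hk
      exact ⟨piv.symm ⟨k, hk⟩, by simp⟩
    · rintro ⟨j', rfl⟩
      exact (piv j').2
  -- the normal-form vectors are exactly the e (piv j)
  have hvec : ∀ j, (stdv n (L j) + ∑ i ∈ freePos n d L j, a i j • stdv n i) = e (piv j) := by
    intro j
    funext k
    rw [eval_normal]
    by_cases hkP : k ∈ pivSet n d W
    · have hc : e (piv j) k = if k = (piv j : Fin n) then 1 else 0 := hcoords (piv j) ⟨k, hkP⟩
      have hnotF : ((k : ℕ) + 1) ∉ freePos n d L j := by
        intro hF
        have h4 := ((freePos_iff n d hd L hLbnd j _).1 hF).2.2.2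
        obtain ⟨j', hj'⟩ := (hPiff k).1 hkP
        exact h4 j' (by simp only [hL]; omega)
      by_cases hkp : k = (piv j : Fin n)
      · have h1 : (k : ℕ) + 1 = L j := by simp only [hL]; rw [hkp]
        rw [if_pos h1, if_neg hnotF, hc, if_pos hkp]
        ring
      · have h1 : (k : ℕ) + 1 ≠ L j := by
          intro h
          exact hkp (Fin.ext (by simp only [hL] at h; omega))
        rw [if_neg h1, if_neg hnotF, hc, if_neg hkp]
        ring
    · have hknp : (k : ℕ) + 1 ≠ L j := by
        intro h
        exact hkP ((hPiff k).2 ⟨j, Fin.ext (by simp only [hL] at h; omega)⟩)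
      rw [if_neg hknp]
      by_cases hw : wgt n d ((k : ℕ) + 1) < wgt n d (L j)
      · have hF : ((k : ℕ) + 1) ∈ freePos n d L j := by
          refine (freePos_iff n d hd L hLbnd j _).2 ⟨by omega, by have := k.isLt; omega, hw, ?_⟩
          intro j' hj'
          exact hkP ((hPiff k).2 ⟨j', Fin.ext (by simp only [hL] at hj'; omega)⟩)
        rw [if_pos hF]
        simp only [ha]
        rw [dif_pos hF]
        have : (⟨(k : ℕ) + 1 - 1, hmemF hF⟩ : Fin n) = k := Fin.ext (by simp)
        rw [this]
        ring
      · have hF : ((k : ℕ) + 1) ∉ freePos n d L j := by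
          intro hF
          exact hw ((freePos_iff n d hd L hLbnd j _).1 hF).2.2.1
        rw [if_neg hF]
        have hne : wgt n d ((k : ℕ) + 1) ≠ wgt n d (L j) := by
          intro h
          exact hknp (wgt_inj (by omega) (by have := k.isLt; omega)
            (hLbnd j).1 (hLbnd j).2 h)
        have hwgt : wgt n d (L j) < wgt n d ((k : ℕ) + 1) := by omega
        simp only [hL] at hwgt
        have := htrunc (piv j) k hwgt
        rw [this]
        ring
  refine ⟨⟨L, a⟩, ⟨hLmono, hLbnd, ?_, ?_, ?_⟩, ?_⟩
  · intro i j hij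
    simp only [ha]
    rw [dif_neg hij]
  · have : (fun j => stdv n (L j) + ∑ i ∈ freePos n d L j, a i j • stdv n i)
        = fun j => e (piv j) := funext hvec
    rw [this]
    exact hindep.comp piv (piv.injective)
  · have : (fun j => stdv n (L j) + ∑ i ∈ freePos n d L j, a i j • stdv n i)
        = e ∘ piv := funext hvec
    rw [this, Function.Surjective.range_comp
      (fun p => ⟨piv.symm p, piv.apply_symm_apply p⟩ : Function.Surjective piv) e]
    exact hspan
  · -- uniqueness
    rintro ⟨L', a'⟩ ⟨hmono', hbnd', hsupp', hind', hspan'⟩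
    replace hmono' : StrictMono L' := hmono'
    replace hbnd' : ∀ j, 1 ≤ L' j ∧ L' j ≤ n := hbnd'
    replace hsupp' : ∀ i j, i ∉ freePos n d L' j → a' i j = 0 := hsupp'
    replace hspan' : Submodule.span ℂ (Set.range fun j =>
      stdv n (L' j) + ∑ i ∈ freePos n d L' j, a' i j • stdv n i) = W := hspan'
    set v' : Fin d → (Fin n → ℂ) :=
      fun j => stdv n (L' j) + ∑ i ∈ freePos n d L' j, a' i j • stdv n i with hv'
    have hv'W : ∀ j, v' j ∈ W := by
      intro j
      rw [← hspan']
      exact Submodule.subset_span ⟨j, rfl⟩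
    set g : Fin d → Fin n := fun j => ⟨L' j - 1, by have := hbnd' j; omega⟩ with hg
    have hgL : ∀ j, ((g j : ℕ)) + 1 = L' j := by
      intro j; have := hbnd' j; simp only [hg]; omega
    have hev : ∀ j (k : Fin n), v' j k
        = (if (k : ℕ) + 1 = L' j then 1 else 0)
          + (if ((k : ℕ) + 1) ∈ freePos n d L' j then a' ((k : ℕ) + 1) j else 0) := by
      intro j k
      rw [hv']
      exact eval_normal n d L' a' j k
    have htr' : ∀ j, v' j ∈ trunc n d (wgt n d ((g j : ℕ) + 1)) := by
      intro j k hk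
      rw [hgL j] at hk
      rw [hev]
      have h1 : (k : ℕ) + 1 ≠ L' j := by
        intro h; rw [h] at hk; omega
      have h2 : ((k : ℕ) + 1) ∉ freePos n d L' j := by
        intro hF
        have := ((freePos_iff n d hd L' hbnd' j _).1 hF).2.2.1
        omega
      rw [if_neg h1, if_neg h2, add_zero]
    have hv'g : ∀ j, v' j (g j) = 1 := by
      intro j
      rw [hev]
      have h1 : ((g j : ℕ)) + 1 = L' j := hgL j
      have h2 : ((g j : ℕ) + 1) ∉ freePos n d L' j := by
        intro hF
        exact ((freePos_iff n d hd L' hbnd' j _).1 hF).2.2.2 j h1.symm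
      rw [if_pos h1, if_neg h2, add_zero]
    have hgP : ∀ j, g j ∈ pivSet n d W := by
      intro j
      exact mem_pivSet.2 ⟨v' j, hv'W j, htr' j, by rw [hv'g j]; exact one_ne_zero⟩
    have hgmono : StrictMono g := by
      intro j j' hj
      have h1 := hmono' hj
      have h2 := hbnd' j
      simp only [hg, Fin.mk_lt_mk]
      omega
    have hge : g = ⇑((pivSet n d W).orderEmbOfFin hcard) := Finset.orderEmbOfFin_unique hcard hgP hgmono
    have hgpiv : ∀ j, (g j : ℕ) = ((piv j : Fin n) : ℕ) := by
      intro j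
      rw [congrFun hge j, hpiv, ← Finset.coe_orderIsoOfFin_apply]
    have hL'L : L' = L := by
      funext j
      rw [← hgL j, hgpiv j, hL]
    -- identify the vectors with e
    have hveq : ∀ j, v' j = e (piv j) := by
      have hfeq := huniq (fun p => v' (piv.symm p)) (fun p => hv'W _) ?_
      · intro j
        have h := congrFun hfeq (piv j)
        simpa using h
      · intro p q
        show v' (piv.symm p) q.1 = if q.1 = p.1 then 1 else 0
        rw [hev]
        set j := piv.symm p with hj
        have hpj : ((piv j : Fin n) : ℕ) = ((p : Fin n) : ℕ) := by
          rw [hj, piv.apply_symm_apply]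
        have hLj : L' j = ((p : Fin n) : ℕ) + 1 := by
          rw [hL'L, hL]
          simp only [hpj]
        obtain ⟨j2, hj2⟩ := (hPiff (q : Fin n)).1 q.2
        have hnF : (((q : Fin n) : ℕ) + 1) ∉ freePos n d L' j := by
          intro hF
          refine ((freePos_iff n d hd L' hbnd' j _).1 hF).2.2.2 j2 ?_
          rw [hL'L, hL]
          simp only []
          rw [hj2]
        rw [if_neg hnF, add_zero]
        by_cases hqp : (q : Fin n) = (p : Fin n)
        · have hv : ((q : Fin n) : ℕ) = ((p : Fin n) : ℕ) := by rw [hqp]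
          rw [if_pos (by omega : ((q : Fin n) : ℕ) + 1 = L' j), if_pos hqp]
        · have hv : ((q : Fin n) : ℕ) ≠ ((p : Fin n) : ℕ) := fun h => hqp (Fin.ext h)
          rw [if_neg (by omega : ¬ ((q : Fin n) : ℕ) + 1 = L' j), if_neg hqp]
    have ha'a : a' = a := by
      funext i j
      by_cases hF : i ∈ freePos n d L j
      · have hFL' : i ∈ freePos n d L' j := by rw [hL'L]; exact hF
        have hi1 : 1 ≤ i := ((freePos_iff n d hd L hLbnd j i).1 hF).1
        set k : Fin n := ⟨i - 1, hmemF hF⟩ with hk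
        have hki : (k : ℕ) + 1 = i := by simp only [hk]; omega
        have h1 : v' j k = a' i j := by
          rw [hev, hki]
          have hne : i ≠ L' j := fun h =>
            ((freePos_iff n d hd L' hbnd' j i).1 hFL').2.2.2 j h.symm
          rw [if_neg hne, if_pos hFL', zero_add]
        have h2 : e (piv j) k = a i j := by
          simp only [ha]
          rw [dif_pos hF]
        rw [← h1, ← h2, hveq j]
      · rw [hsupp' i j (by rw [hL'L]; exact hF)]
        simp only [ha]
        rw [dif_neg hF]
    rw [hL'L, ha'a]
end
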